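/- arXiv:1809.01085 — 6 statements merged into one kernel-verified Lean document; each statement's English description precedes it below -/
import Mathlib

section
/- Let K be a commutative integral domain, let Γ be a finitely generated torsion-free abelian group, and let φ : Γ → ℝ be a group homomorphism. Then the Novikov ring Λ^K(φ(Γ)) is a principal ideal domain if and only if K is a principal ideal domain. -/
/-- The underlying set of the Novikov ring with coefficients in `K`, over an index
type `Γ` weighted by `w : Γ → ℝ`: functions `r : Γ → K` such that for every `c : ℝ`
only finitely many `γ` with `w γ < c` have `r γ ≠ 0`. -/
def NovikovSet (K : Type*) [Zero K] {Γ : Type*} (w : Γ → ℝ) : Set (Γ → K) :=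
  {r | ∀ c : ℝ, {γ : Γ | r γ ≠ 0 ∧ w γ < c}.Finite}

/-- A commutative ring structure on a set `S` of functions `Γ → K` is a Novikov ring
structure if addition is pointwise and multiplication is the convolution product
`(r·s)(γ) = Σ_{α+β=γ} r(α)s(β)`. -/
def IsNovikovRingStructure {K Γ : Type*} [CommRing K] [AddCommGroup Γ]
    (S : Set (Γ → K)) [CommRing ↥S] : Prop :=
  (∀ a b : ↥S, ∀ γ : Γ, ((a + b : ↥S) : Γ → K) γ = a.1 γ + b.1 γ) ∧
  (∀ a b : ↥S, ∀ γ : Γ, ((a * b : ↥S) : Γ → K) γ = ∑ᶠ α : Γ, a.1 α * b.1 (γ - α))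

set_option linter.unusedSectionVars false
set_option linter.unusedVariables false

namespace NovikovPID

open scoped Classical

variable {K : Type*} [CommRing K] {G : Type*} [AddCommGroup G]

section basic

variable (w : G → ℝ)

/-- A nonzero Novikov element has a `w`-minimal element in its support. -/
theorem min_exists {r : G → K} (hr : r ∈ NovikovSet K w) (h : r ≠ 0) :
    ∃ γ₀, r γ₀ ≠ 0 ∧ ∀ γ, r γ ≠ 0 → w γ₀ ≤ w γ := by
  obtain ⟨t, ht⟩ : ∃ γ, r γ ≠ 0 := by
    by_contra hc; push_neg at hc; exact h (funext hc)
  have hfin := hr (w t + 1)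
  have hne : t ∈ {γ : G | r γ ≠ 0 ∧ w γ < w t + 1} := ⟨ht, by linarith⟩
  obtain ⟨γ₀, hγ₀, hmin⟩ := Set.exists_min_image _ w hfin ⟨t, hne⟩
  refine ⟨γ₀, hγ₀.1, fun γ hγ => ?_⟩
  by_cases hlt : w γ < w t + 1
  · exact hmin γ ⟨hγ, hlt⟩
  · have h1 := hmin t hne
    push_neg at hlt
    linarith [hγ₀.2]

/-- The Novikov element supported at a single point. -/
noncomputable def single (γ₀ : G) (k : K) : ↥(NovikovSet K w) :=
  ⟨fun γ => if γ = γ₀ then k else 0, fun c => by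
    apply (Set.finite_singleton γ₀).subset
    intro γ hγ
    simp only [Set.mem_setOf_eq] at hγ
    by_contra hne
    simp only [Set.mem_singleton_iff] at hne
    exact hγ.1 (if_neg hne)⟩

@[simp] theorem single_coeff (γ₀ : G) (k : K) (γ : G) :
    (single w γ₀ k).1 γ = if γ = γ₀ then k else 0 := rfl

noncomputable def nu (a : ↥(NovikovSet K w)) : G :=
  if h : (a : G → K) = 0 then 0 else (min_exists w a.2 h).choose

theorem nu_mem {a : ↥(NovikovSet K w)} (h : (a : G → K) ≠ 0) : a.1 (nu w a) ≠ 0 := by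
  simp only [nu, dif_neg h]
  exact (min_exists w a.2 h).choose_spec.1

theorem nu_min {a : ↥(NovikovSet K w)} (h : (a : G → K) ≠ 0) :
    ∀ γ, a.1 γ ≠ 0 → w (nu w a) ≤ w γ := by
  simp only [nu, dif_neg h]
  exact (min_exists w a.2 h).choose_spec.2

variable [CommRing ↥(NovikovSet K w)]

noncomputable def ecoef (d : K) (a : ↥(NovikovSet K w)) : K :=
  if h : ∃ c, a.1 (nu w a) = d * c then h.choose else 0

theorem ecoef_spec {d : K} {a : ↥(NovikovSet K w)} (h : d ∣ a.1 (nu w a)) :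
    a.1 (nu w a) = d * ecoef w d a := by
  obtain ⟨c, hc⟩ := h
  have hex : ∃ c, a.1 (nu w a) = d * c := ⟨c, hc⟩
  rw [ecoef, dif_pos hex]
  exact hex.choose_spec

noncomputable def dstep (x : ↥(NovikovSet K w)) (d : K) (t : ↥(NovikovSet K w)) :
    ↥(NovikovSet K w) :=
  if (t : G → K) = 0 then 0 else t - single w (nu w t) (ecoef w d t) * x

variable (hS : IsNovikovRingStructure (NovikovSet K w))
include hS

/-- Taking the coefficient at `γ` as an additive homomorphism. -/
def coeffHom (γ : G) : ↥(NovikovSet K w) →+ K :=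
  AddMonoidHom.mk' (fun a => a.1 γ) (fun a b => hS.1 a b γ)

theorem coeff_zero (γ : G) : ((0 : ↥(NovikovSet K w)) : G → K) γ = 0 :=
  (coeffHom w hS γ).map_zero

theorem coeff_add (a b : ↥(NovikovSet K w)) (γ : G) :
    ((a + b : ↥(NovikovSet K w)) : G → K) γ = a.1 γ + b.1 γ := hS.1 a b γ

theorem coeff_sub (a b : ↥(NovikovSet K w)) (γ : G) :
    ((a - b : ↥(NovikovSet K w)) : G → K) γ = a.1 γ - b.1 γ :=
  (coeffHom w hS γ).map_sub a b

theorem zero_val : ((0 : ↥(NovikovSet K w)) : G → K) = 0 :=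
  funext fun γ => coeff_zero w hS γ

theorem eq_zero_iff {a : ↥(NovikovSet K w)} : a = 0 ↔ (a : G → K) = 0 := by
  constructor
  · rintro rfl; exact zero_val w hS
  · intro h; exact Subtype.ext (h.trans (zero_val w hS).symm)

theorem single_mul_coeff (γ₀ : G) (k : K) (b : ↥(NovikovSet K w)) (γ : G) :
    ((single w γ₀ k * b : ↥(NovikovSet K w)) : G → K) γ = k * b.1 (γ - γ₀) := by
  rw [hS.2]
  rw [finsum_eq_single _ γ₀ (fun α hα => by simp [single, if_neg hα])]
  simp [single]

theorem one_eq_single : (1 : ↥(NovikovSet K w)) = single w 0 1 := by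
  apply Subtype.ext; funext γ
  have h := congrArg (fun t : ↥(NovikovSet K w) => t.1 γ) (mul_one (single w 0 1))
  rw [single_mul_coeff w hS 0 1 1 γ, one_mul, sub_zero] at h
  exact h

theorem single_mul_single (γ₁ γ₂ : G) (k₁ k₂ : K) :
    single w γ₁ k₁ * single w γ₂ k₂ = single w (γ₁ + γ₂) (k₁ * k₂) := by
  apply Subtype.ext; funext γ
  rw [single_mul_coeff w hS]
  simp only [single_coeff]
  by_cases h : γ = γ₁ + γ₂
  · rw [if_pos h, if_pos (by rw [h]; abel)]
  · rw [if_neg h, if_neg (fun hc => h (by rw [← sub_add_cancel γ γ₁, hc]; abel)), mul_zero]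

theorem qpart_coeff (g : ℕ → ↥(NovikovSet K w)) (n : ℕ) (γ : G) :
    ((∑ i ∈ Finset.range n, g i : ↥(NovikovSet K w)) : G → K) γ
      = ∑ i ∈ Finset.range n, ((g i : ↥(NovikovSet K w)) : G → K) γ := by
  induction n with
  | zero => simp [coeff_zero w hS]
  | succ n ih => rw [Finset.sum_range_succ, Finset.sum_range_succ, coeff_add w hS, ih]

end basic

section weight

variable (w : G → ℝ) (hw : Function.Injective w)
variable (hadd : ∀ x y : G, w (x + y) = w x + w y)
include hadd

theorem w_zero : w 0 = 0 := by
  have := hadd 0 0; rw [add_zero] at this; linarith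

theorem w_sub (x y : G) : w (x - y) = w x - w y := by
  have := hadd (x - y) y; rw [sub_add_cancel] at this; linarith

theorem w_list_sum (l : List G) : w l.sum = (l.map w).sum := by
  induction l with
  | nil => simpa using w_zero w hadd
  | cons p l ih => simp [hadd, ih]

omit hadd in
theorem length_mul_le_sum {ε : ℝ} (l : List ℝ) (h : ∀ p ∈ l, ε ≤ p) :
    (l.length : ℝ) * ε ≤ l.sum := by
  induction l with
  | nil => simp
  | cons p l ih =>
    have h1 := ih (fun q hq => h q (List.mem_cons_of_mem _ hq))
    have h2 := h p List.mem_cons_self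
    simp only [List.length_cons, List.sum_cons]
    push_cast
    nlinarith

theorem closure_add_finite {A P : Set G}
    (hA : ∀ c : ℝ, {γ ∈ A | w γ < c}.Finite)
    (hP : ∀ c : ℝ, {γ ∈ P | w γ < c}.Finite)
    (hPpos : ∀ γ ∈ P, 0 < w γ) (c : ℝ) :
    {γ | (∃ σ ∈ A, ∃ m ∈ AddSubmonoid.closure P, γ = σ + m) ∧ w γ < c}.Finite := by
  have hM0 : ∀ m ∈ AddSubmonoid.closure P, 0 ≤ w m := by
    intro m hm
    obtain ⟨l, hl, rfl⟩ := AddSubmonoid.exists_list_of_mem_closure hm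
    rw [w_list_sum w hadd]
    apply List.sum_nonneg
    intro p hp
    obtain ⟨g, hg, rfl⟩ := List.mem_map.1 hp
    exact (hPpos g (hl g hg)).le
  rcases Set.eq_empty_or_nonempty {γ ∈ A | w γ < c} with hemp | hne
  · apply Set.Finite.subset Set.finite_empty
    rintro γ ⟨⟨σ, hσ, m, hm, rfl⟩, hlt⟩
    have hσ' : σ ∈ {γ ∈ A | w γ < c} :=
      ⟨hσ, by have := hM0 m hm; have := hadd σ m; linarith⟩
    rw [hemp] at hσ'
    exact hσ'
  · obtain ⟨α₀, hα₀, hα₀min⟩ := Set.exists_min_image _ w (hA c) hne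
    obtain ⟨ε, hε, hεP⟩ : ∃ ε : ℝ, 0 < ε ∧ ∀ p ∈ {γ ∈ P | w γ < c - w α₀}, ε ≤ w p := by
      rcases Set.eq_empty_or_nonempty {γ ∈ P | w γ < c - w α₀} with h | h
      · exact ⟨1, one_pos, fun p hp => absurd hp (by rw [h]; exact fun h => h)⟩
      · obtain ⟨p₀, hp₀, hmin⟩ := Set.exists_min_image _ w (hP (c - w α₀)) h
        exact ⟨w p₀, hPpos _ hp₀.1, hmin⟩
    have hT : ∀ n : ℕ, {γ | ∃ σ ∈ {γ ∈ A | w γ < c}, ∃ l : List G,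
        (∀ p ∈ l, p ∈ {γ ∈ P | w γ < c - w α₀}) ∧ l.length ≤ n ∧ γ = σ + l.sum}.Finite := by
      intro n
      induction n with
      | zero =>
        apply (hA c).subset
        rintro γ ⟨σ, hσ, l, _, hlen, rfl⟩
        rw [List.length_eq_zero_iff.1 (Nat.le_zero.1 hlen)]
        simpa using hσ
      | succ n ih =>
        apply Set.Finite.subset (ih.union (Set.Finite.image2 (· + ·) ih (hP (c - w α₀))))
        rintro γ ⟨σ, hσ, l, hl, hlen, rfl⟩
        cases l with
        | nil => exact Or.inl ⟨σ, hσ, [], by simp⟩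
        | cons p l' =>
          refine Or.inr ?_
          rw [Set.mem_image2]
          refine ⟨σ + l'.sum, ⟨σ, hσ, l', fun q hq => hl q (List.mem_cons_of_mem _ hq),
            by simpa using Nat.succ_le_succ_iff.1 hlen, rfl⟩, p,
            hl p List.mem_cons_self, ?_⟩
          simp only [List.sum_cons]
          abel
    apply (hT (Nat.ceil ((c - w α₀) / ε))).subset
    rintro γ ⟨⟨σ, hσ, m, hm, rfl⟩, hlt⟩
    obtain ⟨l, hl, rfl⟩ := AddSubmonoid.exists_list_of_mem_closure hm
    have hws := hadd σ l.sum
    have hσ' : σ ∈ {γ ∈ A | w γ < c} := ⟨hσ, by have := hM0 _ hm; linarith⟩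
    have hwm : w l.sum < c - w α₀ := by
      have := hα₀min σ hσ'
      linarith
    have hl' : ∀ p ∈ l, p ∈ {γ ∈ P | w γ < c - w α₀} := by
      intro p hp
      refine ⟨hl p hp, ?_⟩
      have h1 : w p ≤ w l.sum := by
        rw [w_list_sum w hadd]
        refine List.single_le_sum (fun x hx => ?_) _ (List.mem_map_of_mem (f := w) hp)
        obtain ⟨g, hg, rfl⟩ := List.mem_map.1 hx
        exact (hPpos g (hl g hg)).le
      linarith
    have hlen : l.length ≤ Nat.ceil ((c - w α₀) / ε) := by
      have h1 : (l.length : ℝ) * ε ≤ (l.map w).sum := by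
        have := length_mul_le_sum (l.map w) (fun q hq => by
          obtain ⟨g, hg, rfl⟩ := List.mem_map.1 hq
          exact hεP g (hl' g hg))
        simpa using this
      rw [← w_list_sum w hadd] at h1
      have h2 : (l.length : ℝ) ≤ (c - w α₀) / ε := by
        rw [le_div_iff₀ hε]
        linarith
      exact_mod_cast h2.trans (Nat.le_ceil _)
    exact ⟨σ, hσ', l, hl', hlen, rfl⟩

variable [CommRing ↥(NovikovSet K w)]
variable (hS : IsNovikovRingStructure (NovikovSet K w))
include hS

theorem conv_support_finite (a b : ↥(NovikovSet K w)) (γ : G) :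
    (Function.support fun α => a.1 α * b.1 (γ - α)).Finite := by
  by_cases hb : (b : G → K) = 0
  · simp [hb]
  · obtain ⟨ν, hν, hmin⟩ := min_exists w b.2 hb
    apply (a.2 (w γ - w ν + 1)).subset
    intro α hα
    simp only [Function.mem_support] at hα
    have ha : a.1 α ≠ 0 := fun h => hα (by simp [h])
    have hbγ : b.1 (γ - α) ≠ 0 := fun h => hα (by simp [h])
    have h1 := hmin _ hbγ
    have h2 := w_sub w hadd γ α
    exact ⟨ha, by linarith⟩

theorem mul_coeff_eq_zero {a b : ↥(NovikovSet K w)} {m m' : ℝ}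
    (hma : ∀ γ, a.1 γ ≠ 0 → m ≤ w γ) (hmb : ∀ γ, b.1 γ ≠ 0 → m' ≤ w γ)
    {γ : G} (hγ : w γ < m + m') :
    ((a * b : ↥(NovikovSet K w)) : G → K) γ = 0 := by
  rw [hS.2]
  apply finsum_eq_zero_of_forall_eq_zero
  intro α
  by_cases ha : a.1 α = 0
  · rw [ha, zero_mul]
  · by_cases hb : b.1 (γ - α) = 0
    · rw [hb, mul_zero]
    · exfalso
      have h1 := hma _ ha
      have h2 := hmb _ hb
      have h3 := w_sub w hadd γ α
      linarith

include hw in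
theorem mul_coeff_min {a b : ↥(NovikovSet K w)} {νa νb : G}
    (ha : a.1 νa ≠ 0) (hma : ∀ γ, a.1 γ ≠ 0 → w νa ≤ w γ)
    (hmb : ∀ γ, b.1 γ ≠ 0 → w νb ≤ w γ) :
    ((a * b : ↥(NovikovSet K w)) : G → K) (νa + νb) = a.1 νa * b.1 νb := by
  rw [hS.2]
  rw [finsum_eq_single _ νa ?_, add_sub_cancel_left]
  intro α hα
  by_cases haα : a.1 α = 0
  · rw [haα, zero_mul]
  · by_cases hbα : b.1 (νa + νb - α) = 0
    · rw [hbα, mul_zero]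
    · exfalso
      have h1 : w νa ≤ w α := hma _ haα
      have h2 : w νa ≠ w α := fun h => hα (hw h).symm
      have h3 := hmb _ hbα
      have h4 := w_sub w hadd (νa + νb) α
      have h5 := hadd νa νb
      linarith [lt_of_le_of_ne h1 h2]

include hw in
theorem mul_ne_zero' [IsDomain K] {a b : ↥(NovikovSet K w)}
    (ha : (a : G → K) ≠ 0) (hb : (b : G → K) ≠ 0) :
    ((a * b : ↥(NovikovSet K w)) : G → K) ≠ 0 := by
  obtain ⟨νa, hνa, hma⟩ := min_exists w a.2 ha
  obtain ⟨νb, hνb, hmb⟩ := min_exists w b.2 hb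
  intro hc
  have h0 : a.1 νa * b.1 νb = 0 := by
    rw [← mul_coeff_min w hw hadd hS hνa hma hmb, hc]
    rfl
  exact mul_ne_zero hνa hνb h0

include hw in
theorem isDomain [IsDomain K] : IsDomain ↥(NovikovSet K w) := by
  have hnt : Nontrivial ↥(NovikovSet K w) := by
    refine ⟨1, 0, fun h => ?_⟩
    have h0 := congrFun (congrArg Subtype.val h) (0 : G)
    rw [one_eq_single w hS, single_coeff, if_pos rfl, coeff_zero w hS] at h0
    exact one_ne_zero h0
  have hnzd : NoZeroDivisors ↥(NovikovSet K w) := by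
    constructor
    intro a b hab
    by_contra hc
    push_neg at hc
    have ha := (not_iff_not.2 (eq_zero_iff w hS)).1 hc.1
    have hb := (not_iff_not.2 (eq_zero_iff w hS)).1 hc.2
    exact mul_ne_zero' w hw hadd hS ha hb ((eq_zero_iff w hS).1 hab)
  exact NoZeroDivisors.to_isDomain _

/-- The ideal of `K` of coefficients at exponent `0` of elements of `I` supported
in nonnegative weights. -/
noncomputable def lc (I : Ideal ↥(NovikovSet K w)) : Ideal K where
  carrier := {k | ∃ r : ↥(NovikovSet K w),
    r ∈ I ∧ (∀ γ, w γ < 0 → r.1 γ = 0) ∧ r.1 0 = k}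
  zero_mem' := ⟨0, I.zero_mem, fun γ _ => coeff_zero w hS γ, coeff_zero w hS 0⟩
  add_mem' := by
    rintro k₁ k₂ ⟨r₁, h₁, hv₁, h0₁⟩ ⟨r₂, h₂, hv₂, h0₂⟩
    exact ⟨r₁ + r₂, I.add_mem h₁ h₂,
      fun γ hγ => by rw [coeff_add w hS, hv₁ γ hγ, hv₂ γ hγ, add_zero],
      by rw [coeff_add w hS, h0₁, h0₂]⟩
  smul_mem' := by
    rintro k k' ⟨r, hrI, hrv, hr0⟩
    refine ⟨single w 0 k * r, I.mul_mem_left _ hrI, fun γ hγ => ?_, ?_⟩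
    · rw [single_mul_coeff w hS, sub_zero, hrv γ hγ, mul_zero]
    · rw [single_mul_coeff w hS, sub_zero, hr0, smul_eq_mul]

theorem mem_lc {I : Ideal ↥(NovikovSet K w)} {k : K} :
    k ∈ lc w hS I ↔ ∃ r : ↥(NovikovSet K w),
      r ∈ I ∧ (∀ γ, w γ < 0 → r.1 γ = 0) ∧ r.1 0 = k := Iff.rfl

theorem lead_mem_lc {I : Ideal ↥(NovikovSet K w)} {r : ↥(NovikovSet K w)} (hr : r ∈ I)
    {ν : G} (hν : ∀ γ, r.1 γ ≠ 0 → w ν ≤ w γ) : r.1 ν ∈ lc w hS I := by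
  refine ⟨single w (-ν) 1 * r, I.mul_mem_left _ hr, fun γ hγ => ?_, ?_⟩
  · rw [single_mul_coeff w hS, one_mul, sub_neg_eq_add]
    by_contra hne
    have h1 := hν _ hne
    have h2 := hadd γ ν
    linarith
  · rw [single_mul_coeff w hS, one_mul, sub_neg_eq_add, zero_add]

/-- The extension of an ideal `J ≤ K` to the Novikov ring: all elements all of whose
coefficients lie in `J`. -/
noncomputable def extIdeal (J : Ideal K) : Ideal ↥(NovikovSet K w) where
  carrier := {r : ↥(NovikovSet K w) | ∀ γ, r.1 γ ∈ J}
  add_mem' := fun {a b} ha hb γ => by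
    rw [coeff_add w hS]; exact J.add_mem (ha γ) (hb γ)
  zero_mem' := fun γ => by rw [coeff_zero w hS]; exact J.zero_mem
  smul_mem' := fun c r hr => by
    intro γ
    rw [smul_eq_mul, hS.2, finsum_eq_sum _ (conv_support_finite w hadd hS c r γ)]
    exact J.sum_mem fun α _ => J.mul_mem_left _ (hr _)

theorem mem_extIdeal {J : Ideal K} {r : ↥(NovikovSet K w)} :
    r ∈ extIdeal w hadd hS J ↔ ∀ γ, r.1 γ ∈ J := Iff.rfl

include hw in
theorem pid_of [IsDomain K] (hpid : IsPrincipalIdealRing ↥(NovikovSet K w)) :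
    IsPrincipalIdealRing K := by
  constructor
  intro J
  obtain ⟨x, hx⟩ := (hpid.principal (extIdeal w hadd hS J)).principal
  by_cases hx0 : (x : G → K) = 0
  · refine ⟨0, ?_⟩
    rw [Submodule.span_zero_singleton, eq_bot_iff]
    intro k hk
    have hmem : single w 0 k ∈ extIdeal w hadd hS J := by
      rw [mem_extIdeal]
      intro γ
      rw [single_coeff]
      split
      · exact hk
      · exact J.zero_mem
    rw [hx, (eq_zero_iff w hS).2 hx0, Submodule.span_zero_singleton,
      Submodule.mem_bot] at hmem
    have := congrFun (congrArg Subtype.val hmem) (0 : G)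
    rw [single_coeff, if_pos rfl, coeff_zero w hS] at this
    rw [this]
    exact Submodule.zero_mem ⊥
  · obtain ⟨νx, hνx, hmx⟩ := min_exists w x.2 hx0
    have hxmem : x ∈ extIdeal w hadd hS J := by
      rw [hx]; exact Submodule.mem_span_singleton_self x
    have hxJ : ∀ γ, x.1 γ ∈ J := (mem_extIdeal w hadd hS).1 hxmem
    refine ⟨x.1 νx, le_antisymm ?_ ?_⟩
    · intro k hk
      rw [Submodule.mem_span_singleton]
      by_cases hk0 : k = 0
      · exact ⟨0, by rw [hk0, zero_smul]⟩
      · have hmem : single w 0 k ∈ extIdeal w hadd hS J := by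
          rw [mem_extIdeal]
          intro γ
          rw [single_coeff]
          split
          · exact hk
          · exact J.zero_mem
        rw [hx, Submodule.mem_span_singleton] at hmem
        obtain ⟨q, hq⟩ := hmem
        rw [smul_eq_mul] at hq
        have hq0 : (q : G → K) ≠ 0 := by
          intro h
          apply hk0
          rw [(eq_zero_iff w hS).2 h, zero_mul] at hq
          have := congrFun (congrArg Subtype.val hq.symm) (0 : G)
          rw [single_coeff, if_pos rfl, coeff_zero w hS] at this
          exact this
        obtain ⟨νq, hνq, hmq⟩ := min_exists w q.2 hq0
        have hcoef := mul_coeff_min w hw hadd hS hνq hmq hmx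
        rw [hq] at hcoef
        have hne : q.1 νq * x.1 νx ≠ 0 := mul_ne_zero hνq hνx
        have hsum : νq + νx = 0 := by
          by_contra hne0
          rw [single_coeff, if_neg hne0] at hcoef
          exact hne hcoef.symm
        rw [single_coeff, if_pos hsum] at hcoef
        exact ⟨q.1 νq, by rw [smul_eq_mul, ← hcoef]⟩
    · rw [Submodule.span_singleton_le_iff_mem]
      exact hxJ νx

include hw in
theorem division [IsDomain K] {I : Ideal ↥(NovikovSet K w)} {x : ↥(NovikovSet K w)}
    {d : K} (hd : d ≠ 0) (hx0 : x.1 0 = d) (hxnn : ∀ γ, w γ < 0 → x.1 γ = 0)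
    (hxI : x ∈ I)
    (hdvd : ∀ r ∈ I, ∀ γ : G, (∀ γ', r.1 γ' ≠ 0 → w γ ≤ w γ') → d ∣ r.1 γ)
    {s : ↥(NovikovSet K w)} (hs : s ∈ I) : ∃ q : ↥(NovikovSet K w), s = q * x := by
  by_cases hs0 : (s : G → K) = 0
  · exact ⟨0, by rw [zero_mul]; exact (eq_zero_iff w hS).2 hs0⟩
  have hxmin : ∀ γ : G, x.1 γ ≠ 0 → (0 : ℝ) ≤ w γ := fun γ hγ => by
    by_contra h; push_neg at h; exact hγ (hxnn γ h)
  -- the iterated remainder sequence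
  set seq : ℕ → ↥(NovikovSet K w) := fun n => (dstep w x d)^[n] s with hseq
  have seq_succ : ∀ n, seq (n + 1) = dstep w x d (seq n) := fun n =>
    Function.iterate_succ_apply' _ _ _
  have seq_mem : ∀ n, seq n ∈ I := by
    intro n
    induction n with
    | zero => exact hs
    | succ n ih =>
      rw [seq_succ]
      by_cases h : ((seq n : ↥(NovikovSet K w)) : G → K) = 0
      · rw [dstep, if_pos h]; exact I.zero_mem
      · rw [dstep, if_neg h]; exact I.sub_mem ih (I.mul_mem_left _ hxI)
  have hdvd' : ∀ n, d ∣ (seq n).1 (nu w (seq n)) :=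
    fun n => hdvd _ (seq_mem n) _ (by
      by_cases h : ((seq n : ↥(NovikovSet K w)) : G → K) = 0
      · intro γ' hγ'; exact absurd (congrFun h γ') hγ'
      · exact nu_min w h)
  have step_coeff : ∀ n, ((seq n : ↥(NovikovSet K w)) : G → K) ≠ 0 → ∀ γ : G,
      ((seq (n + 1) : ↥(NovikovSet K w)) : G → K) γ
        = (seq n).1 γ - ecoef w d (seq n) * x.1 (γ - nu w (seq n)) := by
    intro n h γ
    rw [seq_succ, dstep, if_neg h, coeff_sub w hS, single_mul_coeff w hS]
  have step_min : ∀ n, ((seq n : ↥(NovikovSet K w)) : G → K) ≠ 0 → ∀ γ : G,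
      w γ ≤ w (nu w (seq n)) → ((seq (n + 1) : ↥(NovikovSet K w)) : G → K) γ = 0 := by
    intro n h γ hγ
    rw [step_coeff n h γ]
    by_cases hγν : γ = nu w (seq n)
    · subst hγν
      rw [sub_self, hx0, ecoef_spec w (hdvd' n)]
      ring
    · have hlt : w γ < w (nu w (seq n)) := lt_of_le_of_ne hγ (fun hc => hγν (hw hc))
      rw [hxnn _ (by rw [w_sub w hadd]; linarith), mul_zero, sub_zero]
      by_contra hne
      have := nu_min w h γ hne
      linarith
  -- support control
  set P : Set G := {γ | x.1 γ ≠ 0 ∧ γ ≠ 0} with hP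
  set D : Set G := {γ | ∃ σ ∈ {γ' | s.1 γ' ≠ 0}, ∃ m ∈ AddSubmonoid.closure P, γ = σ + m}
    with hD
  have hDadd : ∀ γ ∈ D, ∀ p : G, x.1 p ≠ 0 → γ + p ∈ D := by
    rintro γ ⟨σ, hσ, m, hm, rfl⟩ p hp
    by_cases hp0 : p = 0
    · subst hp0; rw [add_zero]; exact ⟨σ, hσ, m, hm, rfl⟩
    · exact ⟨σ, hσ, m + p,
        (AddSubmonoid.closure P).add_mem hm (AddSubmonoid.subset_closure ⟨hp, hp0⟩),
        by abel⟩
  have seq_supp : ∀ n, ∀ γ : G, ((seq n : ↥(NovikovSet K w)) : G → K) γ ≠ 0 → γ ∈ D := by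
    intro n
    induction n with
    | zero =>
      intro γ h
      exact ⟨γ, h, 0, (AddSubmonoid.closure P).zero_mem, (add_zero γ).symm⟩
    | succ n ih =>
      intro γ h
      by_cases h0 : ((seq n : ↥(NovikovSet K w)) : G → K) = 0
      · rw [seq_succ, dstep, if_pos h0] at h
        exact absurd (coeff_zero w hS γ) h
      · rw [step_coeff n h0 γ] at h
        by_cases h1 : (seq n).1 γ ≠ 0
        · exact ih γ h1
        · push_neg at h1
          have h2 : x.1 (γ - nu w (seq n)) ≠ 0 := by
            intro hc; rw [h1, hc, mul_zero, sub_zero] at h; exact h rfl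
          have h3 := hDadd _ (ih _ (nu_mem w h0)) _ h2
          have h4 : nu w (seq n) + (γ - nu w (seq n)) = γ := by abel
          rwa [h4] at h3
  have Dfin : ∀ c : ℝ, {γ | γ ∈ D ∧ w γ < c}.Finite := by
    intro c
    have := closure_add_finite w hadd (A := {γ' | s.1 γ' ≠ 0}) (P := P)
      (fun c => s.2 c) (fun c => (x.2 c).subset (fun γ hγ => ⟨hγ.1.1, hγ.2⟩))
      (fun γ hγ => by
        have h1 := hxmin γ hγ.1
        rcases lt_or_eq_of_le h1 with h | h
        · exact h
        · exact absurd (hw (h.symm.trans (w_zero w hadd).symm)) hγ.2) c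
    exact this.subset (fun γ hγ => ⟨hγ.1, hγ.2⟩)
  -- propagation of zero
  have seq_lt : ∀ n, ((seq (n + 1) : ↥(NovikovSet K w)) : G → K) ≠ 0 →
      ((seq n : ↥(NovikovSet K w)) : G → K) ≠ 0 := by
    intro n h h0
    apply h
    rw [seq_succ, dstep, if_pos h0]
    exact zero_val w hS
  have nu_lt : ∀ n, ((seq (n + 1) : ↥(NovikovSet K w)) : G → K) ≠ 0 →
      w (nu w (seq n)) < w (nu w (seq (n + 1))) := by
    intro n h
    by_contra hc
    push_neg at hc
    exact nu_mem w h (step_min n (seq_lt n h) _ hc)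
  have nu_mono : ∀ n m, n ≤ m → ((seq m : ↥(NovikovSet K w)) : G → K) ≠ 0 →
      w (nu w (seq n)) ≤ w (nu w (seq m)) := by
    intro n m hm
    induction m, hm using Nat.le_induction with
    | base => intro _; exact le_refl _
    | succ m hnm ih => intro h; exact le_trans (ih (seq_lt m h)) (nu_lt m h).le
  -- the partial quotients
  set g : ℕ → ↥(NovikovSet K w) := fun i =>
    if h : ((seq i : ↥(NovikovSet K w)) : G → K) = 0 then 0
    else single w (nu w (seq i)) (ecoef w d (seq i)) with hg
  set qpart : ℕ → ↥(NovikovSet K w) := fun n => ∑ i ∈ Finset.range n, g i with hqpart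
  have telescope : ∀ n, s = seq n + qpart n * x := by
    intro n
    induction n with
    | zero =>
      have h0 : qpart 0 = 0 := Finset.sum_range_zero g
      rw [h0, zero_mul, add_zero]
      rfl
    | succ n ih =>
      have hstep : seq n = seq (n + 1) + g n * x := by
        by_cases h : ((seq n : ↥(NovikovSet K w)) : G → K) = 0
        · have h1 : seq n = 0 := (eq_zero_iff w hS).2 h
          have h2 : seq (n + 1) = 0 := by
            rw [seq_succ, dstep, if_pos h]
          have h3 : g n = 0 := by rw [hg]; simp only [dif_pos h]
          rw [h1, h2, h3, zero_mul, add_zero]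
        · have h3 : g n = single w (nu w (seq n)) (ecoef w d (seq n)) := by
            rw [hg]; simp only [dif_neg h]
          rw [seq_succ, dstep, if_neg h, h3]
          ring
      have hsum : qpart (n + 1) = qpart n + g n := by
        rw [hqpart]; exact Finset.sum_range_succ g n
      rw [hsum, ih, hstep]
      ring
  -- case: the division terminates
  by_cases hterm : ∃ N, ((seq N : ↥(NovikovSet K w)) : G → K) = 0
  · obtain ⟨N, hN⟩ := hterm
    refine ⟨qpart N, ?_⟩
    have := telescope N
    rwa [(eq_zero_iff w hS).2 hN, zero_add] at this
  · push_neg at hterm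
    have nu_inj : ∀ n m, nu w (seq n) = nu w (seq m) → n = m := by
      intro n m hnm
      by_contra hne
      rcases Nat.lt_trichotomy n m with h | h | h
      · have h1 := nu_lt n (hterm (n + 1))
        have h2 := nu_mono (n + 1) m h (hterm m)
        rw [hnm] at h1
        linarith
      · exact hne h
      · have h1 := nu_lt m (hterm (m + 1))
        have h2 := nu_mono (m + 1) n h (hterm n)
        rw [hnm] at h2
        linarith
    have e_ne : ∀ n, ecoef w d (seq n) ≠ 0 := by
      intro n hc
      have := ecoef_spec w (hdvd' n)
      rw [hc, mul_zero] at this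
      exact nu_mem w (hterm n) this
    set q0 : G → K := fun γ =>
      if h : ∃ n, nu w (seq n) = γ then ecoef w d (seq h.choose) else 0 with hq0
    have q0_at : ∀ n, q0 (nu w (seq n)) = ecoef w d (seq n) := by
      intro n
      have hex : ∃ m, nu w (seq m) = nu w (seq n) := ⟨n, rfl⟩
      rw [hq0]
      simp only
      rw [dif_pos hex, nu_inj _ _ hex.choose_spec]
    have q0_supp : ∀ γ, q0 γ ≠ 0 → ∃ n, nu w (seq n) = γ := by
      intro γ h
      by_contra hc
      rw [hq0] at h
      simp only at h
      rw [dif_neg hc] at h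
      exact h rfl
    have q0_mem : q0 ∈ NovikovSet K w := by
      intro c
      apply (Dfin c).subset
      rintro γ ⟨h1, h2⟩
      obtain ⟨n, rfl⟩ := q0_supp γ h1
      exact ⟨seq_supp n _ (nu_mem w (hterm n)), h2⟩
    set q : ↥(NovikovSet K w) := ⟨q0, q0_mem⟩ with hq
    have rem_min : ∀ n, ∀ γ' : G,
        ((q - qpart n : ↥(NovikovSet K w)) : G → K) γ' ≠ 0 →
        w (nu w (seq n)) ≤ w γ' := by
      intro n γ' h
      rw [coeff_sub w hS] at h
      by_cases hex : ∃ i, nu w (seq i) = γ'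
      · obtain ⟨i, rfl⟩ := hex
        rcases Nat.lt_or_ge i n with hi | hi
        · exfalso
          apply h
          have hv : (q : G → K) (nu w (seq i)) = ecoef w d (seq i) := q0_at i
          rw [hv, hqpart, qpart_coeff w hS, Finset.sum_eq_single i]
          · rw [hg]
            simp only [dif_neg (hterm i), single_coeff, if_pos rfl]
            exact sub_self _
          · intro j hj hne
            rw [hg]
            simp only [dif_neg (hterm j), single_coeff]
            rw [if_neg (fun hc : nu w (seq i) = nu w (seq j) => hne (nu_inj j i hc.symm))]
          · intro hni
            exact absurd (Finset.mem_range.2 hi) hni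
        · exact nu_mono n i hi (hterm i)
      · exfalso
        apply h
        have h1 : (q : G → K) γ' = 0 := by
          show q0 γ' = 0
          rw [hq0]
          simp only
          rw [dif_neg hex]
        rw [h1, hqpart, qpart_coeff w hS, Finset.sum_eq_zero, sub_zero]
        intro j hj
        rw [hg]
        simp only [dif_neg (hterm j), single_coeff]
        rw [if_neg (fun hc : γ' = nu w (seq j) => hex ⟨j, hc.symm⟩)]
    refine ⟨q, ?_⟩
    apply Subtype.ext
    funext γ
    obtain ⟨n, hn⟩ : ∃ n, w γ < w (nu w (seq n)) := by
      by_contra hc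
      push_neg at hc
      have hfin : {γ' | γ' ∈ D ∧ w γ' < w γ + 1}.Finite := Dfin (w γ + 1)
      have hsub : Set.range (fun n => nu w (seq n)) ⊆ {γ' | γ' ∈ D ∧ w γ' < w γ + 1} := by
        rintro _ ⟨n, rfl⟩
        exact ⟨seq_supp n _ (nu_mem w (hterm n)), by have := hc n; linarith⟩
      exact Set.infinite_range_of_injective
        (f := fun n => nu w (seq n)) (fun a b hab => nu_inj a b hab)
        (hfin.subset hsub)
    have h1 : s.1 γ = ((qpart n * x : ↥(NovikovSet K w)) : G → K) γ := by
      have ht := congrArg (fun t : ↥(NovikovSet K w) => t.1 γ) (telescope n)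
      rw [coeff_add w hS] at ht
      have hz : ((seq n : ↥(NovikovSet K w)) : G → K) γ = 0 := by
        by_contra hne
        have := nu_min w (hterm n) γ hne
        linarith
      rw [ht, hz, zero_add]
    have h2 : ((q * x : ↥(NovikovSet K w)) : G → K) γ
        = ((qpart n * x : ↥(NovikovSet K w)) : G → K) γ := by
      have hqx : q * x = (q - qpart n) * x + qpart n * x := by ring
      rw [hqx, coeff_add w hS,
        mul_coeff_eq_zero w hadd hS (rem_min n) hxmin (by rw [add_zero]; exact hn),
        zero_add]
    rw [h1, ← h2]

include hw in
theorem pid_to [IsDomain K] (hK : IsPrincipalIdealRing K) :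
    IsPrincipalIdealRing ↥(NovikovSet K w) := by
  constructor
  intro I
  obtain ⟨d, hd⟩ := (hK.principal (lc w hS I)).principal
  by_cases hd0 : d = 0
  · refine ⟨0, ?_⟩
    rw [Submodule.span_zero_singleton, eq_bot_iff]
    intro r hr
    rw [Submodule.mem_bot]
    by_cases hr0 : (r : G → K) = 0
    · exact (eq_zero_iff w hS).2 hr0
    · exfalso
      have hmem := lead_mem_lc w hadd hS hr (nu_min w hr0)
      rw [hd, hd0, Submodule.span_zero_singleton, Submodule.mem_bot] at hmem
      exact nu_mem w hr0 hmem
  · have hdI : d ∈ lc w hS I := by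
      rw [hd]; exact Submodule.mem_span_singleton_self d
    obtain ⟨x, hxI, hxnn, hx0⟩ := (mem_lc w hadd hS).1 hdI
    have hdvd : ∀ r ∈ I, ∀ γ : G, (∀ γ', r.1 γ' ≠ 0 → w γ ≤ w γ') → d ∣ r.1 γ := by
      intro r hr γ hmin
      have hmem := lead_mem_lc w hadd hS hr hmin
      rw [hd, Submodule.mem_span_singleton] at hmem
      obtain ⟨a, ha⟩ := hmem
      exact ⟨a, by rw [← ha, smul_eq_mul, mul_comm]⟩
    refine ⟨x, le_antisymm ?_ ?_⟩
    · intro r hr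
      obtain ⟨q, hq⟩ := division w hw hadd hS hd0 hx0 hxnn hxI hdvd hr
      rw [Submodule.mem_span_singleton]
      exact ⟨q, by rw [smul_eq_mul, ← hq]⟩
    · rw [Submodule.span_singleton_le_iff_mem]
      exact hxI

end weight

end NovikovPID

/-- Let `K` be a commutative integral domain, `Γ` a finitely generated torsion-free
abelian group, and `φ : Γ → ℝ` a group homomorphism. Then the Novikov ring
`Λ^K(φ(Γ))` is a principal ideal domain if and only if `K` is a principal ideal
domain. -/
theorem novikovRing_over_image_isPID_iff
    (K : Type*) [CommRing K] [IsDomain K]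
    (Γ : Type*) [AddCommGroup Γ] [AddGroup.FG Γ] (hTF : ∀ g : Γ, g ≠ 0 → ¬IsOfFinAddOrder g)
    (φ : Γ →+ ℝ)
    [CommRing ↥(NovikovSet K (fun a : φ.range => (a : ℝ)))]
    (hS : IsNovikovRingStructure (NovikovSet K (fun a : φ.range => (a : ℝ)))) :
    (IsPrincipalIdealRing ↥(NovikovSet K (fun a : φ.range => (a : ℝ))) ∧
      IsDomain ↥(NovikovSet K (fun a : φ.range => (a : ℝ)))) ↔
    (IsPrincipalIdealRing K ∧ IsDomain K) := by
  have hw : Function.Injective (fun a : φ.range => (a : ℝ)) := fun a b h => Subtype.ext h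
  have hadd : ∀ x y : φ.range,
      ((fun a : φ.range => (a : ℝ)) (x + y))
        = (fun a : φ.range => (a : ℝ)) x + (fun a : φ.range => (a : ℝ)) y :=
    fun x y => rfl
  constructor
  · rintro ⟨hpid, _⟩
    exact ⟨NovikovPID.pid_of _ hw hadd hS hpid, inferInstance⟩
  · rintro ⟨hpid, _⟩
    exact ⟨NovikovPID.pid_to _ hw hadd hS hpid, NovikovPID.isDomain _ hw hadd hS⟩
end

section
/- Let K be a commutative ring and let Λ^K_univ := Λ^K(ℝ) be the universal Novikov ring, obtained by taking Γ₀ = ℝ. If K is a field then Λ^K_univ is a field, and if K is a principal ideal domain then Λ^K_univ is a principal ideal domain. -/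
/-- The underlying set of the universal Novikov ring `Λ^K_univ = Λ^K(ℝ)`. -/
def UnivNovikovSet (K : Type*) [Zero K] : Set (ℝ → K) :=
  NovikovSet K (fun a : ℝ => a)

open Set Function Pointwise HahnSeries

namespace Set

def LeftFinite {α : Type*} [Preorder α] (s : Set α) : Prop :=
  ∀ c : α, (s ∩ Iio c).Finite

theorem Finite.leftFinite {α : Type*} [Preorder α] {s : Set α} (hs : s.Finite) :
    s.LeftFinite :=
  fun _ => hs.inter_of_left _

namespace LeftFinite

section Preorder

variable {α : Type*} [Preorder α] {s t : Set α}

theorem mono (hs : s.LeftFinite) (h : t ⊆ s) : t.LeftFinite :=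
  fun c => (hs c).subset (inter_subset_inter_left _ h)

theorem union (hs : s.LeftFinite) (ht : t.LeftFinite) : (s ∪ t).LeftFinite := fun c => by
  rw [union_inter_distrib_right]
  exact (hs c).union (ht c)

end Preorder

section LinearOrder

variable {α : Type*} [LinearOrder α] {s : Set α}

theorem isPWO (hs : s.LeftFinite) : s.IsPWO := by
  refine (isWF_iff_no_descending_seq.mpr fun f hf hmem => ?_).isPWO
  refine infinite_of_injective_forall_mem (f := fun n => f (n + 1))
    (hf.injective.comp (add_left_injective 1)) (fun n => ?_) (hs (f 0))
  exact ⟨hmem _, hf n.succ_pos⟩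

theorem bddBelow [Nonempty α] (hs : s.LeftFinite) : BddBelow s := by
  rcases s.eq_empty_or_nonempty with rfl | ⟨a, ha⟩
  · exact bddBelow_empty
  refine ((hs a).bddBelow.union (bddBelow_Ici (a := a))).mono fun x hx => ?_
  rcases lt_or_ge x a with h | h
  · exact Or.inl ⟨hx, h⟩
  · exact Or.inr h

end LinearOrder

theorem add {α : Type*} [AddCommGroup α] [LinearOrder α] [IsOrderedAddMonoid α] {s t : Set α}
    (hs : s.LeftFinite) (ht : t.LeftFinite) : (s + t).LeftFinite := by
  obtain ⟨a₀, ha₀⟩ := hs.bddBelow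
  obtain ⟨b₀, hb₀⟩ := ht.bddBelow
  intro c
  refine ((hs (c - b₀)).add (ht (c - a₀))).subset ?_
  rintro _ ⟨⟨a, ha, b, hb, rfl⟩, hc : a + b < c⟩
  refine ⟨a, ⟨ha, ?_⟩, b, ⟨hb, ?_⟩, rfl⟩
  · exact lt_sub_iff_add_lt.mpr ((add_le_add_right (hb₀ hb) a).trans_lt hc)
  · exact lt_sub_iff_add_lt'.mpr ((add_le_add_left (ha₀ ha) b).trans_lt hc)

theorem addSubmonoid_closure {D : Set ℝ} (hD : D.LeftFinite) {δ : ℝ} (hδ : 0 < δ)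
    (hDδ : D ⊆ Ici δ) : (AddSubmonoid.closure D : Set ℝ).LeftFinite := by
  set M := AddSubmonoid.closure D
  have hM_nonneg : ∀ y ∈ M, 0 ≤ y := fun y hy => by
    induction hy using AddSubmonoid.closure_induction_left with
    | zero => exact le_rfl
    | add_left d hd y _ hy0 => linarith [mem_Ici.mp (hDδ hd)]
  have hstep : ∀ c, (M : Set ℝ) ∩ Iio c ⊆
      insert 0 ((D ∩ Iio c) + ((M : Set ℝ) ∩ Iio (c - δ))) := by
    rintro c y ⟨hy, hyc : y < c⟩
    induction hy using AddSubmonoid.closure_induction_left with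
    | zero => exact mem_insert _ _
    | add_left d hd y hy _ =>
      have hδd := mem_Ici.mp (hDδ hd)
      have hy0 := hM_nonneg y hy
      exact Or.inr ⟨d, ⟨hd, show d < c by linarith⟩, y, ⟨hy, show y < c - δ by linarith⟩, rfl⟩
  have hmul : ∀ n : ℕ, ((M : Set ℝ) ∩ Iio (n * δ)).Finite := by
    intro n
    induction n with
    | zero =>
      refine finite_empty.subset fun y ⟨hy, hyc⟩ => ?_
      simp only [CharP.cast_eq_zero, zero_mul, mem_Iio] at hyc
      exact absurd (hM_nonneg y hy) hyc.not_ge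
    | succ n ih =>
      refine (((hD _).add ?_).insert 0).subset (hstep _)
      rwa [Nat.cast_succ, add_one_mul, add_sub_cancel_right]
  intro c
  obtain ⟨n, hn⟩ := exists_nat_ge (c / δ)
  exact (hmul n).subset (inter_subset_inter_right _ (Iio_subset_Iio ((div_le_iff₀ hδ).mp hn)))

end LeftFinite

end Set

namespace HahnSeries

section Coefficients

variable {Γ R : Type*}

theorem coeff_mul_eq_finsum [AddCommGroup Γ] [PartialOrder Γ] [IsOrderedAddMonoid Γ]
    [NonUnitalNonAssocSemiring R] (x y : HahnSeries Γ R) (γ : Γ) :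
    (x * y).coeff γ = ∑ᶠ α, x.coeff α * y.coeff (γ - α) := by
  classical
  set A := Finset.antidiagonal x.isPWO_support y.isPWO_support γ
  have hsupp : Function.support (fun α => x.coeff α * y.coeff (γ - α)) ⊆ A.image Prod.fst :=
    fun α hα => Finset.mem_image.mpr ⟨(α, γ - α), Finset.mem_antidiagonal.mpr
      ⟨left_ne_zero_of_mul hα, right_ne_zero_of_mul hα, add_sub_cancel _ _⟩, rfl⟩
  rw [coeff_mul, finsum_eq_sum_of_support_subset _ hsupp, Finset.sum_image]
  · refine Finset.sum_congr rfl fun ij hij => ?_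
    rw [← (Finset.mem_antidiagonal.mp hij).2.2, add_sub_cancel_left]
  · intro ij hij kl hkl h
    have hij' := (Finset.mem_antidiagonal.mp hij).2.2
    have hkl' := (Finset.mem_antidiagonal.mp hkl).2.2
    exact Prod.ext h (add_left_cancel (hij'.trans (h ▸ hkl'.symm)))

variable [AddCommMonoid Γ] [LinearOrder Γ] [IsOrderedCancelAddMonoid Γ]
  [NonUnitalNonAssocSemiring R] {x y : HahnSeries Γ R} {a b : Γ}

theorem coeff_mul_eq_zero_of_forall_lt (hx : ∀ i < a, x.coeff i = 0)
    (hy : ∀ j < b, y.coeff j = 0) {γ : Γ} (hγ : γ < a + b) : (x * y).coeff γ = 0 := by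
  rw [coeff_mul]
  refine Finset.sum_eq_zero fun ij hij => ?_
  rw [← (Finset.mem_antidiagonal.mp hij).2.2] at hγ
  rcases lt_or_ge ij.1 a with hi | hi
  · rw [hx _ hi, zero_mul]
  · rw [hy _ (lt_of_add_lt_add_left (hγ.trans_le (add_le_add_left hi b))), mul_zero]

theorem coeff_mul_add_of_forall_lt (hx : ∀ i < a, x.coeff i = 0)
    (hy : ∀ j < b, y.coeff j = 0) : (x * y).coeff (a + b) = x.coeff a * y.coeff b := by
  rw [coeff_mul]
  refine Finset.sum_eq_single (a, b) (fun ij hij hne => ?_) fun hab => ?_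
  · obtain ⟨-, -, hsum⟩ := Finset.mem_antidiagonal.mp hij
    rcases lt_or_ge ij.1 a with hi | hi
    · rw [hx _ hi, zero_mul]
    rcases lt_or_ge ij.2 b with hj | hj
    · rw [hy _ hj, mul_zero]
    exfalso
    rcases hi.lt_or_eq with hi | rfl
    · exact (add_lt_add_of_lt_of_le hi hj).ne' hsum
    · exact hne (Prod.ext rfl (add_left_cancel hsum))
  · by_contra h
    exact hab (Finset.mem_antidiagonal.mpr ⟨left_ne_zero_of_mul h, right_ne_zero_of_mul h, rfl⟩)

end Coefficients

section Map

variable {Γ R S : Type*} [AddCommMonoid Γ] [PartialOrder Γ] [IsOrderedCancelAddMonoid Γ]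
  [Semiring R] [Semiring S]

def mapRingHom (f : R →+* S) : HahnSeries Γ R →+* HahnSeries Γ S where
  toFun x := x.map f
  map_one' := HahnSeries.map_one f.toMonoidWithZeroHom
  map_mul' _ _ := HahnSeries.map_mul f.toNonUnitalRingHom
  map_zero' := HahnSeries.map_zero f.toAddMonoidHom.toZeroHom
  map_add' _ _ := HahnSeries.map_add f.toAddMonoidHom

@[simp]
theorem coeff_mapRingHom (f : R →+* S) (x : HahnSeries Γ R) (γ : Γ) :
    (mapRingHom f x).coeff γ = f (x.coeff γ) :=
  rfl

variable {f : R →+* S}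

theorem support_mapRingHom (hf : Injective f) (x : HahnSeries Γ R) :
    (mapRingHom f x).support = x.support := by
  ext γ
  simp [map_ne_zero_iff f hf]

theorem mapRingHom_injective (hf : Injective f) : Injective (mapRingHom (Γ := Γ) f) :=
  fun _ _ h => HahnSeries.ext (funext fun γ => hf (by simpa using congr_arg (coeff · γ) h))

theorem exists_mapRingHom_eq_of_forall_mem_range (hf : Injective f) (y : HahnSeries Γ S)
    (hy : ∀ γ, y.coeff γ ∈ range f) : ∃ x : HahnSeries Γ R, mapRingHom f x = y := by
  choose c hc using hy
  have hsupp : Function.support c = y.support := by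
    ext γ
    simp [← hc γ, map_ne_zero_iff f hf]
  exact ⟨⟨c, hsupp ▸ y.isPWO_support⟩, HahnSeries.ext (funext hc)⟩

end Map

end HahnSeries

/-- The Novikov ring `Λ^R_univ`, realised inside the Hahn series over `ℝ`. -/
def novikovSubring (R : Type*) [Ring R] : Subring (HahnSeries ℝ R) where
  carrier := {x | x.support.LeftFinite}
  mul_mem' hx hy := (hx.add hy).mono support_mul_subset
  one_mem' := ((finite_singleton 0).subset support_single_subset).leftFinite
  add_mem' hx hy := (hx.union hy).mono (support_add_subset _ _)
  zero_mem' := by simp [Set.LeftFinite]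
  neg_mem' hx := by simpa [HahnSeries.support_neg] using hx

section Ring

variable {R : Type*} [Ring R]

theorem mem_novikovSubring {x : HahnSeries ℝ R} :
    x ∈ novikovSubring R ↔ x.support.LeftFinite :=
  Iff.rfl

theorem single_mem_novikovSubring (a : ℝ) (r : R) : single a r ∈ novikovSubring R :=
  ((finite_singleton a).subset support_single_subset).leftFinite

end Ring

theorem mem_univNovikovSet_iff {K : Type*} [Zero K] {r : ℝ → K} :
    r ∈ UnivNovikovSet K ↔ (Function.support r).LeftFinite :=
  Iff.rfl

def univNovikovEquiv {K : Type*} [CommRing K] [CommRing (UnivNovikovSet K)]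
    (hS : IsNovikovRingStructure (UnivNovikovSet K)) :
    UnivNovikovSet K ≃+* novikovSubring K where
  toFun a := ⟨⟨a.1, (mem_univNovikovSet_iff.mp a.2).isPWO⟩, a.2⟩
  invFun x := ⟨x.1.coeff, x.2⟩
  left_inv _ := rfl
  right_inv _ := rfl
  map_mul' a b := by
    ext γ
    rw [Subring.coe_mul, coeff_mul_eq_finsum]
    exact hS.2 a b γ
  map_add' a b := by
    ext γ
    exact hS.1 a b γ

section Field

theorem hsum_powers_mem_novikovSubring {R : Type*} [CommRing R] {y : HahnSeries ℝ R}
    (hy : y ∈ novikovSubring R) (hpos : 0 < y.orderTop) :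
    (SummableFamily.powers y).hsum ∈ novikovSubring R := by
  obtain ⟨δ, hδ, hyδ⟩ : ∃ δ > 0, y.support ⊆ Ici δ := by
    rcases eq_or_ne y 0 with rfl | hy0
    · exact ⟨1, one_pos, by simp⟩
    · exact ⟨y.order, (zero_lt_orderTop_iff hy0).mp hpos, fun _ => order_le_of_coeff_ne_zero⟩
  refine (hy.addSubmonoid_closure hδ hyδ).mono
    (SummableFamily.support_hsum_subset.trans (iUnion_subset fun n => ?_))
  rw [SummableFamily.powers_of_orderTop_pos hpos]
  exact SummableFamily.support_pow_subset_closure y n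

variable {F : Type*} [Field F]

theorem inv_mem_novikovSubring {x : HahnSeries ℝ F} (hx : x ∈ novikovSubring F) :
    x⁻¹ ∈ novikovSubring F := by
  rcases eq_or_ne x 0 with rfl | hx0
  · simp
  rw [inv_def]
  refine mul_mem (single_mem_novikovSubring _ _) (hsum_powers_mem_novikovSubring
    (sub_mem (one_mem _) (mul_mem (single_mem_novikovSubring _ _) hx)) ?_)
  exact unit_aux x (inv_mul_cancel₀ (leadingCoeff_ne_zero.mpr hx0)) _ (neg_add_cancel x.order)

theorem isField_novikovSubring : IsField (novikovSubring F) where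
  exists_pair_ne := ⟨0, 1, zero_ne_one⟩
  mul_comm := mul_comm
  mul_inv_cancel {a} ha := ⟨⟨a.1⁻¹, inv_mem_novikovSubring a.2⟩,
    Subtype.ext (mul_inv_cancel₀ (by simpa using ha))⟩

end Field

namespace novikovSubring

section LeadingIdeal

variable {R : Type*} [CommRing R]

/-- Since every `single μ 1` is a unit of the Novikov ring, this is the ideal of all leading
coefficients of elements of `I`. -/
def leadingIdeal (I : Ideal (novikovSubring R)) : Ideal R where
  carrier := {a | ∃ x ∈ I, (∀ β < 0, (x : HahnSeries ℝ R).coeff β = 0) ∧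
    (x : HahnSeries ℝ R).coeff 0 = a}
  add_mem' := by
    rintro _ _ ⟨x, hx, hx0, rfl⟩ ⟨y, hy, hy0, rfl⟩
    exact ⟨x + y, I.add_mem hx hy, fun β hβ => by simp [hx0 β hβ, hy0 β hβ], by simp⟩
  zero_mem' := ⟨0, I.zero_mem, fun _ _ => rfl, rfl⟩
  smul_mem' := by
    rintro c _ ⟨x, hx, hx0, rfl⟩
    exact ⟨⟨single 0 c, single_mem_novikovSubring 0 c⟩ * x, I.mul_mem_left _ hx,
      fun β hβ => by simp [hx0 β hβ], by simp⟩

variable {I : Ideal (novikovSubring R)}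

theorem coeff_mem_leadingIdeal {w : novikovSubring R} (hw : w ∈ I) {μ : ℝ}
    (hlow : ∀ β < μ, (w : HahnSeries ℝ R).coeff β = 0) :
    (w : HahnSeries ℝ R).coeff μ ∈ leadingIdeal I :=
  ⟨⟨single (-μ) 1, single_mem_novikovSubring _ _⟩ * w, I.mul_mem_left _ hw,
    fun β hβ => by simp [coeff_single_mul, hlow (β + μ) (by linarith)],
    by simp [coeff_single_mul]⟩

theorem eq_bot_of_leadingIdeal_eq_bot (h : leadingIdeal I = ⊥) : I = ⊥ := by
  refine eq_bot_iff.mpr fun s hs => ?_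
  have hlead := coeff_mem_leadingIdeal hs fun β hβ => coeff_eq_zero_of_lt_order hβ
  rw [h, Ideal.mem_bot, coeff_order_eq_zero] at hlead
  exact (Ideal.mem_bot).mpr (Subtype.ext hlead)

end LeadingIdeal

section Division

variable {K : Type*} [CommRing K]

local notation "ι" => mapRingHom (Γ := ℝ) (algebraMap K (FractionRing K))

theorem mapRingHom_mem_iff {x : HahnSeries ℝ K} :
    ι x ∈ novikovSubring (FractionRing K) ↔ x ∈ novikovSubring K := by
  rw [mem_novikovSubring, mem_novikovSubring, support_mapRingHom (IsFractionRing.injective K _)]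

variable [IsDomain K] {I : Ideal (novikovSubring K)} {r s : novikovSubring K}

theorem coeff_div_mem_range_of_forall_lt (hrI : r ∈ I) (hsI : s ∈ I)
    (hr : ∀ β < 0, (r : HahnSeries ℝ K).coeff β = 0) (hr0 : (r : HahnSeries ℝ K).coeff 0 ≠ 0)
    (hdvd : ∀ a ∈ leadingIdeal I, (r : HahnSeries ℝ K).coeff 0 ∣ a) {m : ℝ}
    (hlow : ∀ β < m, (ι s / ι r).coeff β ∈ range (algebraMap K (FractionRing K))) :
    (ι s / ι r).coeff m ∈ range (algebraMap K (FractionRing K)) := by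
  have hinj := IsFractionRing.injective K (FractionRing K)
  set q := ι s / ι r
  have hιr : ι r ≠ 0 := fun h => hr0 (hinj (by simpa using congr_arg (coeff · 0) h))
  have hq : q ∈ novikovSubring (FractionRing K) :=
    mul_mem (mapRingHom_mem_iff.mpr s.2)
      (inv_mem_novikovSubring (mapRingHom_mem_iff.mpr r.2))
  obtain ⟨t, ht⟩ := exists_mapRingHom_eq_of_forall_mem_range hinj (truncLT m q) fun β => by
    rw [HahnSeries.coeff_truncLT]
    split_ifs with h
    exacts [hlow β h, ⟨0, map_zero _⟩]
  have htmem : t ∈ novikovSubring K := by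
    rw [← mapRingHom_mem_iff, ht]
    exact hq.mono (support_truncLT_subset m q)
  set w := s - r * ⟨t, htmem⟩
  have hιw : ι w = ι r * (q - truncLT m q) := by
    rw [show (w : HahnSeries ℝ K) = s - r * t from rfl, map_sub, map_mul, ht, mul_sub,
      mul_div_cancel₀ _ hιr]
  have hιr_low : ∀ β < 0, (ι r).coeff β = 0 := fun β hβ => by simp [hr β hβ]
  have hd_low : ∀ β < m, (q - truncLT m q).coeff β = 0 := fun β hβ => by
    simp [coeff_truncLT_of_lt hβ]
  have hw_low : ∀ β < m, (w : HahnSeries ℝ K).coeff β = 0 := fun β hβ => hinj <| by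
    rw [map_zero, ← coeff_mapRingHom, hιw]
    exact coeff_mul_eq_zero_of_forall_lt hιr_low hd_low (by simpa using hβ)
  have hw_m : algebraMap K _ ((w : HahnSeries ℝ K).coeff m) =
      algebraMap K _ ((r : HahnSeries ℝ K).coeff 0) * q.coeff m := by
    have hlead := coeff_mul_add_of_forall_lt hιr_low hd_low
    rw [zero_add] at hlead
    rw [← coeff_mapRingHom, hιw, hlead, coeff_mapRingHom, coeff_sub,
      coeff_truncLT_of_le le_rfl, sub_zero]
  obtain ⟨k, hk⟩ := hdvd _ (coeff_mem_leadingIdeal (I.sub_mem hsI (I.mul_mem_right _ hrI)) hw_low)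
  refine ⟨k, mul_left_cancel₀ ((map_ne_zero_iff _ hinj).mpr hr0) ?_⟩
  rw [← map_mul, ← hk, hw_m]

theorem coeff_div_mem_range (hrI : r ∈ I) (hsI : s ∈ I)
    (hr : ∀ β < 0, (r : HahnSeries ℝ K).coeff β = 0) (hr0 : (r : HahnSeries ℝ K).coeff 0 ≠ 0)
    (hdvd : ∀ a ∈ leadingIdeal I, (r : HahnSeries ℝ K).coeff 0 ∣ a) (μ : ℝ) :
    (ι s / ι r).coeff μ ∈ range (algebraMap K (FractionRing K)) := by
  set q := ι s / ι r
  by_contra hμ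
  have hbad : {β | q.coeff β ∉ range (algebraMap K (FractionRing K))}.IsWF :=
    q.isWF_support.subset fun β hβ h0 => hβ ⟨0, by rw [map_zero]; exact h0.symm⟩
  refine hbad.min_mem ⟨μ, hμ⟩ (coeff_div_mem_range_of_forall_lt hrI hsI hr hr0 hdvd fun β hβ => ?_)
  exact of_not_not fun h => hbad.not_lt_min ⟨μ, hμ⟩ h hβ

theorem dvd_of_mem (hrI : r ∈ I) (hsI : s ∈ I)
    (hr : ∀ β < 0, (r : HahnSeries ℝ K).coeff β = 0) (hr0 : (r : HahnSeries ℝ K).coeff 0 ≠ 0)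
    (hdvd : ∀ a ∈ leadingIdeal I, (r : HahnSeries ℝ K).coeff 0 ∣ a) : r ∣ s := by
  have hinj := IsFractionRing.injective K (FractionRing K)
  have hιr : ι r ≠ 0 := fun h => hr0 (hinj (by simpa using congr_arg (coeff · 0) h))
  obtain ⟨q, hq⟩ := exists_mapRingHom_eq_of_forall_mem_range hinj _
    (coeff_div_mem_range hrI hsI hr hr0 hdvd)
  have hqmem : q ∈ novikovSubring K := by
    rw [← mapRingHom_mem_iff, hq]
    exact mul_mem (mapRingHom_mem_iff.mpr s.2)
      (inv_mem_novikovSubring (mapRingHom_mem_iff.mpr r.2))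
  refine ⟨⟨q, hqmem⟩, Subtype.ext (mapRingHom_injective hinj ?_)⟩
  rw [show ((r * ⟨q, hqmem⟩ : novikovSubring K) : HahnSeries ℝ K) = r * q from rfl, map_mul, hq,
    mul_div_cancel₀ _ hιr]

end Division

instance {K : Type*} [CommRing K] [IsDomain K] [IsPrincipalIdealRing K] :
    IsPrincipalIdealRing (novikovSubring K) where
  principal I := by
    obtain ⟨g, hg⟩ := Submodule.IsPrincipal.principal (leadingIdeal I)
    rcases eq_or_ne g 0 with rfl | hg0
    · rw [eq_bot_of_leadingIdeal_eq_bot (I := I) (by rwa [Submodule.span_zero_singleton] at hg)]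
      exact bot_isPrincipal
    obtain ⟨r, hrI, hr, rfl⟩ : g ∈ leadingIdeal I := hg ▸ Submodule.mem_span_singleton_self g
    refine ⟨r, le_antisymm (fun s hsI => Ideal.mem_span_singleton.mpr ?_) ?_⟩
    · exact dvd_of_mem hrI hsI hr hg0 fun a ha =>
        Ideal.mem_span_singleton.mp (by rw [hg] at ha; exact ha)
    · exact Ideal.span_le.mpr (singleton_subset_iff.mpr hrI)

end novikovSubring

/-- Let `K` be a commutative ring and `Λ^K_univ := Λ^K(ℝ)` the universal Novikov
ring. If `K` is a field then `Λ^K_univ` is a field, and if `K` is a principal ideal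
domain then `Λ^K_univ` is a principal ideal domain. -/
theorem univNovikovRing_isField_and_isPID
    (K : Type*) [CommRing K]
    [CommRing ↥(UnivNovikovSet K)]
    (hS : IsNovikovRingStructure (UnivNovikovSet K)) :
    (IsField K → IsField ↥(UnivNovikovSet K)) ∧
    ((IsPrincipalIdealRing K ∧ IsDomain K) →
      (IsPrincipalIdealRing ↥(UnivNovikovSet K) ∧ IsDomain ↥(UnivNovikovSet K))) := by
  set e := univNovikovEquiv hS
  refine ⟨fun hK => ?_, fun ⟨_, _⟩ => ?_⟩
  · let := hK.toField
    exact e.toMulEquiv.isField isField_novikovSubring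
  · exact ⟨IsPrincipalIdealRing.of_surjective e.symm e.symm.surjective,
      e.toMulEquiv.isDomain _⟩
end

section
/- Let K be a commutative ring, let Γ be a finitely generated torsion-free abelian group, and let φ : Γ → ℝ be a group homomorphism. Then there is a ring isomorphism Λ^K_φ(Γ) ≅ Λ^{K[ker φ]}(φ(Γ)), where the right-hand side is the Novikov ring over the subgroup φ(Γ) ≤ ℝ with coefficients in the group algebra K[ker φ]. -/
/-- The older Mathlib's `AddMonoid.IsTorsionFree`, restated with its old meaning. -/
def AddMonoid.IsTorsionFree (G : Type*) [AddMonoid G] : Prop :=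
  ∀ g : G, g ≠ 0 → ¬IsOfFinAddOrder g

/-!
Since `φ(Γ) ≤ ℝ` is finitely generated and torsion-free, hence free, `φ` splits and
`Γ ≃ φ(Γ) × ker φ` with `φ` becoming the first projection. A function on `φ(Γ) × ker φ` is
Novikov exactly when, after currying, each fibre `{a} × ker φ` carries finitely many nonzero
values (an element of `K[ker φ]`) and these elements form a Novikov function on `φ(Γ)`.
Currying turns the convolution over `φ(Γ) × ker φ` into the convolution over `φ(Γ)` of the
products in `K[ker φ]`, because all the sums involved have finite support.
-/
open Function Set

noncomputable def finsumConv {K Γ : Type*} [NonUnitalNonAssocSemiring K] [AddGroup Γ]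
    (r s : Γ → K) : Γ → K :=
  fun γ => ∑ᶠ α, r α * s (γ - α)

theorem AddMonoidAlgebra.coeff_mul_eq_finsum {K A : Type*} [Semiring K] [AddCommGroup A]
    (x y : AddMonoidAlgebra K A) (a : A) :
    (x * y).coeff a = ∑ᶠ b, x.coeff b * y.coeff (a - b) := by
  rw [coeff_mul_apply_left, finsum_eq_sum_of_support_subset (s := x.coeff.support)]
  · simp only [Finsupp.sum, neg_add_eq_sub]
  · exact fun b hb => Finsupp.mem_support_iff.2 (left_ne_zero_of_mul hb)

theorem finsumConv_comp_addEquiv {K A B : Type*} [NonUnitalNonAssocSemiring K] [AddGroup A]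
    [AddGroup B] (e : A ≃+ B) (r s : B → K) :
    finsumConv (r ∘ e) (s ∘ e) = finsumConv r s ∘ e := by
  ext γ
  simp only [finsumConv, comp_apply, map_sub]
  exact finsum_comp_equiv e.toEquiv (f := fun β => r β * s (e γ - β))

namespace NovikovSet

theorem hasFiniteSupport_mul_sub {K A : Type*} [MulZeroClass K] [AddCommGroup A] {w : A →+ ℝ}
    {r s : A → K} (hr : r ∈ NovikovSet K w) (hs : s ∈ NovikovSet K w) (γ : A) :
    HasFiniteSupport fun α => r α * s (γ - α) := by
  refine ((hr 0).union ((hs (w γ + 1)).image (γ - ·))).subset fun α hα => ?_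
  by_cases hα₀ : w α < 0
  · exact Or.inl ⟨left_ne_zero_of_mul hα, hα₀⟩
  · refine Or.inr ⟨γ - α, ⟨right_ne_zero_of_mul hα, ?_⟩, sub_sub_cancel γ α⟩
    rw [map_sub]
    linarith

theorem comp_mem {K A B : Type*} [Zero K] {w : B → ℝ} {f : A → B} (hf : Injective f)
    {r : B → K} (hr : r ∈ NovikovSet K w) : r ∘ f ∈ NovikovSet K (w ∘ f) :=
  fun c => (hr c).preimage hf.injOn

theorem bijOn_comp_equiv {K A B : Type*} [Zero K] (w : B → ℝ) (e : A ≃ B) :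
    BijOn (· ∘ e) (NovikovSet K w) (NovikovSet K (w ∘ e)) := by
  refine ⟨fun r hr => comp_mem e.injective hr, e.surjective.injective_comp_right.injOn,
    fun r hr => ⟨r ∘ e.symm, ?_, by ext; simp⟩⟩
  simpa [comp_assoc] using comp_mem e.symm.injective hr

end NovikovSet

section Uncurry

variable {K G H : Type*} [Semiring K]

def uncurryCoeff (R : G → AddMonoidAlgebra K H) : G × H → K :=
  fun p => (R p.1).coeff p.2

theorem uncurryCoeff_add (R S : G → AddMonoidAlgebra K H) :
    uncurryCoeff (R + S) = uncurryCoeff R + uncurryCoeff S :=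
  rfl

theorem uncurryCoeff_injective : Injective (uncurryCoeff (K := K) (G := G) (H := H)) :=
  fun _ _ hRS => funext fun g => AddMonoidAlgebra.ext <| Finsupp.ext fun h => congr_fun hRS (g, h)

theorem mapsTo_uncurryCoeff (w : G → ℝ) :
    MapsTo uncurryCoeff (NovikovSet (AddMonoidAlgebra K H) w) (NovikovSet K (w ∘ Prod.fst)) := by
  intro R hR c
  refine ((hR c).biUnion fun g _ =>
    (finite_singleton g).prod (R g).coeff.support.finite_toSet).subset ?_
  rintro ⟨g, h⟩ ⟨hgh, hg⟩
  exact mem_biUnion ⟨fun hR0 => hgh (by simp [uncurryCoeff, hR0]), hg⟩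
    ⟨rfl, Finsupp.mem_support_iff.2 hgh⟩

theorem surjOn_uncurryCoeff (w : G → ℝ) :
    SurjOn uncurryCoeff (NovikovSet (AddMonoidAlgebra K H) w) (NovikovSet K (w ∘ Prod.fst)) := by
  intro r hr
  have hfin (g : G) : (support fun h => r (g, h)).Finite :=
    ((hr (w g + 1)).preimage (Prod.mk_right_injective g).injOn).subset
      fun h hh => ⟨hh, lt_add_one (w g)⟩
  refine ⟨fun g => .ofCoeff (Finsupp.ofSupportFinite _ (hfin g)), fun c => ?_, rfl⟩
  refine ((hr c).image Prod.fst).subset fun g ⟨hg, hgc⟩ => ?_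
  obtain ⟨h, hh⟩ : ∃ h, r (g, h) ≠ 0 := by
    by_contra! h0
    exact hg (AddMonoidAlgebra.ext (Finsupp.ext h0))
  exact ⟨(g, h), ⟨hh, hgc⟩, rfl⟩

theorem bijOn_uncurryCoeff (w : G → ℝ) :
    BijOn uncurryCoeff (NovikovSet (AddMonoidAlgebra K H) w) (NovikovSet K (w ∘ Prod.fst)) :=
  ⟨mapsTo_uncurryCoeff w, uncurryCoeff_injective.injOn, surjOn_uncurryCoeff w⟩

theorem uncurryCoeff_finsumConv [AddCommGroup G] [AddCommGroup H] {w : G →+ ℝ}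
    {R S : G → AddMonoidAlgebra K H} (hR : R ∈ NovikovSet (AddMonoidAlgebra K H) w)
    (hS : S ∈ NovikovSet (AddMonoidAlgebra K H) w) :
    uncurryCoeff (finsumConv R S) = finsumConv (uncurryCoeff R) (uncurryCoeff S) := by
  ext ⟨g, h⟩
  have hfin := NovikovSet.hasFiniteSupport_mul_sub (w := w.comp (AddMonoidHom.fst G H))
    (mapsTo_uncurryCoeff w hR) (mapsTo_uncurryCoeff w hS) (g, h)
  calc uncurryCoeff (finsumConv R S) (g, h)
      = ((Finsupp.applyAddHom h).comp AddMonoidAlgebra.coeffAddEquiv.toAddMonoidHom)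
          (∑ᶠ g', R g' * S (g - g')) := rfl
    _ = ∑ᶠ g', (R g' * S (g - g')).coeff h :=
        map_finsum _ (NovikovSet.hasFiniteSupport_mul_sub hR hS g)
    _ = ∑ᶠ g', ∑ᶠ h', (R g').coeff h' * (S (g - g')).coeff (h - h') := by
        simp only [AddMonoidAlgebra.coeff_mul_eq_finsum]
    _ = finsumConv (uncurryCoeff R) (uncurryCoeff S) (g, h) := (finsum_curry _ hfin).symm

end Uncurry

namespace IsNovikovRingStructure

variable {K Γ : Type*} [CommRing K] [AddCommGroup Γ] {S : Set (Γ → K)} [CommRing S]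

theorem coe_add (hS : IsNovikovRingStructure S) (a b : S) :
    ((a + b : S) : Γ → K) = a + b :=
  funext (hS.1 a b)

theorem coe_mul (hS : IsNovikovRingStructure S) (a b : S) :
    ((a * b : S) : Γ → K) = finsumConv a b :=
  funext (hS.2 a b)

noncomputable def ringEquivOfBijOn {K' Γ' : Type*} [CommRing K'] [AddCommGroup Γ']
    {T : Set (Γ' → K')} [CommRing T] (hS : IsNovikovRingStructure S)
    (hT : IsNovikovRingStructure T) (Ψ : (Γ → K) → Γ' → K') (hΨ : BijOn Ψ S T)
    (hadd : ∀ r s, Ψ (r + s) = Ψ r + Ψ s)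
    (hmul : ∀ r ∈ S, ∀ s ∈ S, Ψ (finsumConv r s) = finsumConv (Ψ r) (Ψ s)) : S ≃+* T :=
  { hΨ.equiv Ψ with
    map_add' a b := Subtype.ext <| by
      change Ψ ((a + b : S) : Γ → K) = ((_ + _ : T) : Γ' → K')
      rw [hS.coe_add, hT.coe_add, hadd]
      rfl
    map_mul' a b := Subtype.ext <| by
      change Ψ ((a * b : S) : Γ → K) = ((_ * _ : T) : Γ' → K')
      rw [hS.coe_mul, hT.coe_mul, hmul a a.2 b b.2]
      rfl }

end IsNovikovRingStructure

theorem AddMonoidHom.exists_addEquiv_range_prod_ker {Γ M : Type*} [AddCommGroup Γ]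
    [AddGroup.FG Γ] [AddCommGroup M] [IsAddTorsionFree M] (φ : Γ →+ M) :
    ∃ e : φ.range × φ.ker ≃+ Γ, ∀ p, φ (e p) = p.1 := by
  obtain ⟨σ, hσ⟩ := φ.rangeRestrict.toIntLinearMap.exists_rightInverse_of_surjective
    (LinearMap.range_eq_top.2 φ.rangeRestrict_surjective)
  have hφσ (a : φ.range) : φ (σ a) = a := congr_arg Subtype.val (LinearMap.congr_fun hσ a)
  refine ⟨
    { toFun p := σ p.1 + p.2
      invFun γ := (φ.rangeRestrict γ, ⟨γ - σ (φ.rangeRestrict γ), by simp [hφσ]⟩)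
      left_inv := fun ⟨a, k⟩ => ?_
      right_inv γ := add_sub_cancel _ γ
      map_add' p q := by
        simp only [Prod.fst_add, Prod.snd_add, map_add, AddSubgroup.coe_add]
        abel },
    fun ⟨a, k⟩ => by simp [hφσ, φ.mem_ker.1 k.2]⟩
  have hπ : φ.rangeRestrict (σ a + k) = a := Subtype.ext (by simp [hφσ, φ.mem_ker.1 k.2])
  simp [hπ]

section Splitting

variable {K Γ G H : Type*} [AddCommGroup Γ] [AddCommGroup G] [AddCommGroup H]
  {φ : Γ →+ ℝ} {w : G →+ ℝ} (e : G × H ≃+ Γ) (he : ∀ p, φ (e p) = w p.1)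
include he

theorem bijOn_uncurryCoeff_comp_symm [Semiring K] :
    BijOn (fun R => uncurryCoeff R ∘ e.symm) (NovikovSet (AddMonoidAlgebra K H) w)
      (NovikovSet K φ) := by
  have hφ : ⇑φ = (w ∘ Prod.fst) ∘ e.symm := funext fun γ => by simpa using he (e.symm γ)
  rw [hφ]
  exact (NovikovSet.bijOn_comp_equiv _ e.symm.toEquiv).comp (bijOn_uncurryCoeff w)

noncomputable def IsNovikovRingStructure.ringEquivOfAddEquivProd [CommRing K]
    [CommRing (NovikovSet (AddMonoidAlgebra K H) w)] [CommRing (NovikovSet K φ)]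
    (hT : IsNovikovRingStructure (NovikovSet (AddMonoidAlgebra K H) w))
    (hS : IsNovikovRingStructure (NovikovSet K φ)) :
    NovikovSet (AddMonoidAlgebra K H) w ≃+* NovikovSet K φ :=
  hT.ringEquivOfBijOn hS _ (bijOn_uncurryCoeff_comp_symm e he) (fun _ _ => rfl)
    fun _ hr _ hs => by rw [uncurryCoeff_finsumConv hr hs, finsumConv_comp_addEquiv]

end Splitting

theorem novikovRing_iso_novikovRing_groupAlgebra_ker_general
    (K : Type*) [CommRing K]
    (Γ : Type*) [AddCommGroup Γ] [AddGroup.FG Γ]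
    (φ : Γ →+ ℝ)
    [CommRing ↥(NovikovSet K ⇑φ)]
    (h₁ : IsNovikovRingStructure (NovikovSet K ⇑φ))
    [CommRing ↥(NovikovSet (AddMonoidAlgebra K φ.ker) (fun a : φ.range => (a : ℝ)))]
    (h₂ : IsNovikovRingStructure
      (NovikovSet (AddMonoidAlgebra K φ.ker) (fun a : φ.range => (a : ℝ)))) :
    Nonempty
      (↥(NovikovSet K ⇑φ) ≃+*
        ↥(NovikovSet (AddMonoidAlgebra K φ.ker) (fun a : φ.range => (a : ℝ)))) := by
  obtain ⟨e, he⟩ := φ.exists_addEquiv_range_prod_ker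
  -- `fun a => (a : ℝ)` is `⇑φ.range.subtype` only up to unfolding, invisible to instance search
  let _ : CommRing (NovikovSet (AddMonoidAlgebra K φ.ker) φ.range.subtype) := ‹_›
  exact ⟨(IsNovikovRingStructure.ringEquivOfAddEquivProd (w := φ.range.subtype) e he h₂ h₁).symm⟩

/-- Let `K` be a commutative ring, `Γ` a finitely generated torsion-free abelian
group and `φ : Γ → ℝ` a group homomorphism.  Then there is a ring isomorphism
`Λ^K_φ(Γ) ≅ Λ^{K[ker φ]}(φ(Γ))`, where the right-hand side is the Novikov ring over
the subgroup `φ(Γ) ≤ ℝ` with coefficients in the group algebra `K[ker φ]`. -/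
theorem novikovRing_iso_novikovRing_groupAlgebra_ker
    (K : Type*) [CommRing K]
    (Γ : Type*) [AddCommGroup Γ] [AddGroup.FG Γ] (hTF : AddMonoid.IsTorsionFree Γ)
    (φ : Γ →+ ℝ)
    [CommRing ↥(NovikovSet K ⇑φ)]
    (h₁ : IsNovikovRingStructure (NovikovSet K ⇑φ))
    [CommRing ↥(NovikovSet (AddMonoidAlgebra K φ.ker) (fun a : φ.range => (a : ℝ)))]
    (h₂ : IsNovikovRingStructure
      (NovikovSet (AddMonoidAlgebra K φ.ker) (fun a : φ.range => (a : ℝ)))) :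
    Nonempty
      (↥(NovikovSet K ⇑φ) ≃+*
        ↥(NovikovSet (AddMonoidAlgebra K φ.ker) (fun a : φ.range => (a : ℝ)))) :=
  novikovRing_iso_novikovRing_groupAlgebra_ker_general K Γ φ h₁ h₂
end

section
/- Let K be a commutative integral domain, let Γ be a finitely generated torsion-free abelian group, and let φ : Γ → ℝ be a group homomorphism. Then the Novikov ring Λ^K_φ(Γ) is a commutative integral domain. -/
/-!
Order `Γ` lexicographically, first by `φ` and then by an embedding `Γ ↪ ℤⁿ` (a finitely generated
torsion-free abelian group is free of finite rank). The finiteness condition defining the Novikov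
ring makes the support of every nonzero element have a least element for this order, and the
coefficient of a product at the sum of the two least elements is the product of the two leading
coefficients, which is nonzero because `K` is a domain.
-/

open Function

theorem AddGroup.exists_injective_addMonoidHom_lex_fin (Γ : Type*) [AddCommGroup Γ]
    [AddGroup.FG Γ] [IsAddTorsionFree Γ] :
    ∃ (n : ℕ) (ψ : Γ →+ Lex (Fin n → ℤ)), Injective ψ := by
  have : Module.Finite ℤ Γ := Module.Finite.iff_addGroup_fg.mpr ‹_›
  have : Module.Free ℤ Γ := Module.free_of_finite_type_torsion_free'
  let e := (Module.finBasis ℤ Γ).equivFun.toAddEquiv.trans (toLexAddEquiv _)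
  exact ⟨_, e.toAddMonoidHom, e.injective⟩

theorem NovikovSet.exists_forall_le {K Γ L : Type*} [Zero K] [LinearOrder L] {w : Γ → ℝ}
    (κ : Γ → L) (hκ : ∀ γ γ', κ γ ≤ κ γ' → w γ ≤ w γ') {r : Γ → K}
    (hr : r ∈ NovikovSet K w) (h0 : r ≠ 0) :
    ∃ γ₀, r γ₀ ≠ 0 ∧ ∀ γ, r γ ≠ 0 → κ γ₀ ≤ κ γ := by
  obtain ⟨γ₁, hγ₁⟩ := Function.ne_iff.mp h0
  -- every `γ` in the support with `κ γ ≤ κ γ₁` lies in this finite set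
  have hT := hr (w γ₁ + 1)
  obtain ⟨γ₀, hγ₀T, hγ₀⟩ := hT.toFinset.exists_min_image κ
    ⟨γ₁, hT.mem_toFinset.mpr ⟨hγ₁, by linarith⟩⟩
  refine ⟨γ₀, (hT.mem_toFinset.mp hγ₀T).1, fun γ hγ => ?_⟩
  by_cases hlt : w γ < w γ₁ + 1
  · exact hγ₀ γ (hT.mem_toFinset.mpr ⟨hγ, hlt⟩)
  · have hγ₁γ : κ γ₁ < κ γ := lt_of_not_ge fun h => by linarith [hκ γ γ₁ h]
    exact (hγ₀ γ₁ (hT.mem_toFinset.mpr ⟨hγ₁, by linarith⟩)).trans hγ₁γ.le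

theorem finsum_mul_sub_add_eq_mul_of_forall_le {K Γ L : Type*} [NonUnitalNonAssocSemiring K]
    [AddCommGroup Γ] [AddCommMonoid L] [LinearOrder L] [IsOrderedCancelAddMonoid L]
    (κ : Γ →+ L) (hκ : Injective κ) {a b : Γ → K} {α₀ β₀ : Γ}
    (ha : ∀ α, a α ≠ 0 → κ α₀ ≤ κ α) (hb : ∀ β, b β ≠ 0 → κ β₀ ≤ κ β) :
    ∑ᶠ α, a α * b (α₀ + β₀ - α) = a α₀ * b β₀ := by
  rw [finsum_eq_single _ α₀ fun α hα => ?_, add_sub_cancel_left]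
  by_contra hne
  have hα₀α : κ α₀ < κ α := (ha α (left_ne_zero_of_mul hne)).lt_of_ne (hκ.ne hα).symm
  have hβ₀β := hb _ (right_ne_zero_of_mul hne)
  have := add_lt_add_of_lt_of_le hα₀α hβ₀β
  rw [← map_add, ← map_add, add_sub_cancel] at this
  exact this.false

namespace IsNovikovRingStructure

variable {K Γ : Type*} [CommRing K] [AddCommGroup Γ]

theorem coe_zero {S : Set (Γ → K)} [CommRing S] (hS : IsNovikovRingStructure S) :
    ((0 : S) : Γ → K) = 0 := by
  funext γ
  have h := hS.1 0 0 γ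
  rwa [add_zero, left_eq_add] at h

theorem nontrivial [Nontrivial K] {w : Γ → ℝ} [CommRing (NovikovSet K w)]
    (hS : IsNovikovRingStructure (NovikovSet K w)) : Nontrivial (NovikovSet K w) := by
  classical
  have hδ : Pi.single 0 1 ∈ NovikovSet K w := fun c =>
    (Set.finite_singleton 0).subset fun γ hγ => by_contra fun h => hγ.1 (Pi.single_eq_of_ne h 1)
  refine ⟨⟨⟨_, hδ⟩, 0, fun h => ?_⟩⟩
  have := congrFun (congrArg Subtype.val h) 0
  rw [hS.coe_zero] at this
  simp at this

theorem noZeroDivisors [NoZeroDivisors K] {w : Γ → ℝ} [CommRing (NovikovSet K w)]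
    (hS : IsNovikovRingStructure (NovikovSet K w)) {L : Type*} [AddCommMonoid L] [LinearOrder L]
    [IsOrderedCancelAddMonoid L] (κ : Γ →+ L) (hκ : Injective κ)
    (hκw : ∀ γ γ', κ γ ≤ κ γ' → w γ ≤ w γ') : NoZeroDivisors (NovikovSet K w) := by
  refine ⟨fun {a b} hab => or_iff_not_and_not.mpr fun ⟨ha, hb⟩ => ?_⟩
  have ne_zero {r : NovikovSet K w} (hr : r ≠ 0) : (r : Γ → K) ≠ 0 := by
    rwa [← hS.coe_zero, Ne, Subtype.val_inj]
  obtain ⟨α₀, hα₀, hα₀min⟩ := NovikovSet.exists_forall_le κ hκw a.2 (ne_zero ha)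
  obtain ⟨β₀, hβ₀, hβ₀min⟩ := NovikovSet.exists_forall_le κ hκw b.2 (ne_zero hb)
  have hlead := hS.2 a b (α₀ + β₀)
  rw [finsum_mul_sub_add_eq_mul_of_forall_le κ hκ hα₀min hβ₀min, hab, hS.coe_zero] at hlead
  exact mul_ne_zero hα₀ hβ₀ hlead.symm

end IsNovikovRingStructure

/-- Let `K` be a commutative integral domain, `Γ` a finitely generated torsion-free
abelian group, and `φ : Γ → ℝ` a group homomorphism.  Then the Novikov ring
`Λ^K_φ(Γ)` is a commutative integral domain. -/
theorem novikovRing_phi_isDomain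
    (K : Type*) [CommRing K] [IsDomain K]
    (Γ : Type*) [AddCommGroup Γ] [AddGroup.FG Γ] (hTF : ∀ g : Γ, g ≠ 0 → ¬IsOfFinAddOrder g)
    (φ : Γ →+ ℝ)
    [CommRing ↥(NovikovSet K ⇑φ)]
    (hS : IsNovikovRingStructure (NovikovSet K ⇑φ)) :
    IsDomain ↥(NovikovSet K ⇑φ) := by
  have : IsAddTorsionFree Γ := IsAddTorsionFree.of_not_isOfFinAddOrder hTF
  obtain ⟨n, ψ, hψ⟩ := AddGroup.exists_injective_addMonoidHom_lex_fin Γ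
  let κ : Γ →+ ℝ ×ₗ Lex (Fin n → ℤ) := (toLexAddEquiv _).toAddMonoidHom.comp (φ.prod ψ)
  have hκ : Injective κ := fun x y h => hψ (congrArg Prod.snd (toLex.injective h))
  have := hS.nontrivial
  have := hS.noZeroDivisors κ hκ fun γ γ' => Prod.Lex.monotone_fst (κ γ) (κ γ')
  exact NoZeroDivisors.to_isDomain _
end

section
/- Let K be a commutative ring, let Γ be a finitely generated torsion-free abelian group, and let φ : Γ → ℝ be a group homomorphism. Then the assignment sending r ∈ Λ^K_φ(Γ) to the function s : φ(Γ) → K defined by s(a) = Σ_{γ : φ(γ) = a} r(γ) is well defined (each such sum is finite and s satisfies the Novikov condition on φ(Γ)) and is a ring homomorphism Λ^K_φ(Γ) → Λ^K(φ(Γ)); on monomials it is given by e^γ ↦ e^{φ(γ)}. -/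
/-!
The pushforward sums `r` over the fibres of `φ`. A fibre meets the support of `r` in a finite
set, since it lies below a level of `φ`, and pushing forward only merges terms of equal weight,
so the Novikov condition survives. Additivity is then clear, and the unit `e^0` goes to `e^0`.
For multiplicativity, the pushforward of `r * r'` and the product of the pushforwards of `r` and
`r'` are both, at `a`, the sum of `r x * r' y` over the pairs with `φ x + φ y = a`; there are
finitely many such pairs in the support because `φ` is bounded below on the supports of `r` and
`r'`.
-/

open Function Set

theorem finsum_mem_fiberwise {A B M : Type*} [AddCommMonoid M] (g : A → B) (S : Set B)
    (H : A → M) (h : (g ⁻¹' S ∩ support H).Finite) :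
    ∑ᶠ b ∈ S, ∑ᶠ x ∈ g ⁻¹' {b}, H x = ∑ᶠ x ∈ g ⁻¹' S, H x := by
  classical
  set t := h.toFinset
  have fiber (b : B) (hb : b ∈ S) :
      ∑ᶠ x ∈ g ⁻¹' {b}, H x = ∑ x ∈ t with g x = b, H x := by
    refine finsum_mem_eq_sum_of_subset _ ?_ ?_
    · rintro x ⟨rfl, hx⟩
      simpa [t] using ⟨hb, hx⟩
    · intro x hx
      simp_all
  rw [finsum_mem_congr rfl fiber, finsum_mem_eq_sum_of_subset (t := t.image g),
    Finset.sum_fiberwise_of_maps_to (fun x hx => Finset.mem_image_of_mem g hx),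
    finsum_mem_eq_sum H h]
  · exact inter_subset_right.trans (Finset.support_of_fiberwise_sum_subset_image t H g)
  · intro b hb
    obtain ⟨x, hx, rfl⟩ := Finset.mem_image.mp hb
    simp_all [t]

theorem finsum_mem_mul_finsum_mem {α β R : Type*} [NonUnitalNonAssocSemiring R] {s : Set α}
    {t : Set β} {f : α → R} {g : β → R} (hs : (s ∩ support f).Finite)
    (ht : (t ∩ support g).Finite) :
    (∑ᶠ x ∈ s, f x) * ∑ᶠ y ∈ t, g y = ∑ᶠ p ∈ s ×ˢ t, f p.1 * g p.2 := by
  rw [finsum_mem_eq_sum f hs, finsum_mem_eq_sum g ht, Finset.sum_mul_sum, ← Finset.sum_product',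
    finsum_mem_eq_sum_of_subset]
  · rintro p ⟨hp, hne⟩
    simp [hp.1, hp.2, left_ne_zero_of_mul hne, right_ne_zero_of_mul hne]
  · intro p hp
    simp_all

theorem finsum_comp_sub_eq_finsum_mem_add {G M : Type*} [AddCommGroup G] [AddCommMonoid M]
    (H : G × G → M) (γ : G) :
    ∑ᶠ α, H (α, γ - α) = ∑ᶠ p ∈ (fun p : G × G => p.1 + p.2) ⁻¹' {γ}, H p := by
  have : (fun p : G × G => p.1 + p.2) ⁻¹' {γ} = range fun α => (α, γ - α) := by
    ext ⟨x, y⟩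
    simp [eq_sub_iff_add_eq', eq_comm]
  rw [this, finsum_mem_range fun α β h => congrArg Prod.fst h]

section Novikov

variable {K Γ Δ : Type*} [CommRing K]

namespace NovikovSet

variable {φ : Γ → ℝ} {r s : Γ → K}

theorem single_mem [DecidableEq Γ] (φ : Γ → ℝ) (β : Γ) (x : K) :
    Pi.single β x ∈ NovikovSet K φ := fun _ =>
  (finite_singleton β).subset fun _ hγ => Pi.support_single_subset hγ.1

theorem finite_setOf_ne_zero_and_eq (hr : r ∈ NovikovSet K φ) (c : ℝ) :
    {γ | r γ ≠ 0 ∧ φ γ = c}.Finite :=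
  (hr (c + 1)).subset fun _ ⟨hγ, hc⟩ => ⟨hγ, by linarith⟩

theorem finite_preimage_singleton_inter_support {w : Δ → ℝ} {f : Γ → Δ}
    (hφ : ∀ γ, w (f γ) = φ γ) (hr : r ∈ NovikovSet K φ) (d : Δ) :
    (f ⁻¹' {d} ∩ support r).Finite :=
  (finite_setOf_ne_zero_and_eq hr (w d)).subset fun γ ⟨hd, hγ⟩ => ⟨hγ, by rw [← hφ, hd]⟩

theorem bddBelow_image_support (hr : r ∈ NovikovSet K φ) : BddBelow (φ '' support r) := by
  refine (((hr 0).image φ).bddBelow.union (bddBelow_Ici (a := 0))).mono ?_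
  rintro _ ⟨γ, hγ, rfl⟩
  by_cases h : φ γ < 0
  · exact Or.inl ⟨γ, ⟨hγ, h⟩, rfl⟩
  · exact Or.inr (not_lt.mp h)

theorem finite_inter_support_mul (hr : r ∈ NovikovSet K φ) (hs : s ∈ NovikovSet K φ) (c : ℝ) :
    ({p : Γ × Γ | φ p.1 + φ p.2 ≤ c} ∩ support fun p => r p.1 * s p.2).Finite := by
  obtain ⟨m, hm⟩ := bddBelow_image_support hr
  obtain ⟨n, hn⟩ := bddBelow_image_support hs
  refine ((hr (c - n + 1)).prod (hs (c - m + 1))).subset ?_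
  rintro p ⟨hc : φ p.1 + φ p.2 ≤ c, hne⟩
  have h₁ : r p.1 ≠ 0 := left_ne_zero_of_mul hne
  have h₂ : s p.2 ≠ 0 := right_ne_zero_of_mul hne
  have := hm (mem_image_of_mem φ h₁)
  have := hn (mem_image_of_mem φ h₂)
  exact ⟨⟨h₁, by linarith⟩, ⟨h₂, by linarith⟩⟩

end NovikovSet

noncomputable def novikovPushforward (f : Γ → Δ) (r : Γ → K) (d : Δ) : K :=
  ∑ᶠ γ ∈ f ⁻¹' {d}, r γ

variable {φ : Γ → ℝ} {w : Δ → ℝ} {r s : Γ → K}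

theorem novikovPushforward_mem {f : Γ → Δ} (hφ : ∀ γ, w (f γ) = φ γ)
    (hr : r ∈ NovikovSet K φ) : novikovPushforward f r ∈ NovikovSet K w := by
  intro c
  refine ((hr c).image f).subset ?_
  rintro d ⟨hd, hc⟩
  obtain ⟨γ, hγ, hne⟩ := exists_ne_zero_of_finsum_mem_ne_zero hd
  rw [mem_preimage, mem_singleton_iff] at hγ
  exact ⟨γ, ⟨hne, by rwa [← hφ, hγ]⟩, hγ⟩

theorem novikovPushforward_single [DecidableEq Γ] [DecidableEq Δ] (f : Γ → Δ) (β : Γ) (x : K) :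
    novikovPushforward f (Pi.single β x) = Pi.single (f β) x := by
  ext d
  rw [novikovPushforward, finsum_mem_def, finsum_eq_single _ β fun γ hγ => by simp [hγ]]
  by_cases h : f β = d
  · simp [h]
  · simp [h, Ne.symm h]

theorem novikovPushforward_add {f : Γ → Δ} (hφ : ∀ γ, w (f γ) = φ γ)
    (hr : r ∈ NovikovSet K φ) (hs : s ∈ NovikovSet K φ) :
    novikovPushforward f (r + s) = novikovPushforward f r + novikovPushforward f s :=
  funext fun d => finsum_mem_add_distrib'
    (NovikovSet.finite_preimage_singleton_inter_support hφ hr d)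
    (NovikovSet.finite_preimage_singleton_inter_support hφ hs d)

variable [AddCommGroup Γ] [AddCommGroup Δ]

theorem novikovPushforward_rangeRestrict {M : Type*} [AddCommGroup M] (g : Γ →+ M)
    (r : Γ → K) :
    novikovPushforward g.rangeRestrict r = fun a : g.range => ∑ᶠ γ ∈ {γ | g γ = (a : M)}, r γ := by
  ext a
  have fiber : g.rangeRestrict ⁻¹' {a} = {γ | g γ = a} := by
    ext γ
    simp [Subtype.ext_iff]
  rw [novikovPushforward, fiber]

theorem novikovPushforward_convolution {f : Γ →+ Δ} (hφ : ∀ γ, w (f γ) = φ γ)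
    (hw : ∀ d e, w (d + e) = w d + w e) (hr : r ∈ NovikovSet K φ) (hs : s ∈ NovikovSet K φ)
    (d : Δ) :
    novikovPushforward f (fun γ => ∑ᶠ α, r α * s (γ - α)) d =
      ∑ᶠ e, novikovPushforward f r e * novikovPushforward f s (d - e) := by
  have hfin : ((fun p : Γ × Γ => f p.1 + f p.2) ⁻¹' {d} ∩
      support fun p => r p.1 * s p.2).Finite := by
    refine (NovikovSet.finite_inter_support_mul hr hs (w d)).subset fun p ⟨hp, hne⟩ => ⟨?_, hne⟩
    rw [mem_preimage, mem_singleton_iff] at hp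
    change φ p.1 + φ p.2 ≤ w d
    rw [← hφ, ← hφ, ← hw, hp]
  calc novikovPushforward f (fun γ => ∑ᶠ α, r α * s (γ - α)) d
      = ∑ᶠ γ ∈ f ⁻¹' {d}, ∑ᶠ p ∈ (fun p : Γ × Γ => p.1 + p.2) ⁻¹' {γ}, r p.1 * s p.2 := by
        simp only [novikovPushforward]
        exact finsum_mem_congr rfl fun γ _ =>
          finsum_comp_sub_eq_finsum_mem_add (fun p => r p.1 * s p.2) γ
    _ = ∑ᶠ p ∈ (fun p : Γ × Γ => f p.1 + f p.2) ⁻¹' {d}, r p.1 * s p.2 := by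
        rw [finsum_mem_fiberwise]
        · simp only [preimage_preimage, map_add]
        · simpa only [preimage_preimage, map_add] using hfin
    _ = ∑ᶠ q ∈ (fun q : Δ × Δ => q.1 + q.2) ⁻¹' {d},
          ∑ᶠ p ∈ Prod.map f f ⁻¹' {q}, r p.1 * s p.2 := by
        rw [finsum_mem_fiberwise]
        · rfl
        · exact hfin
    _ = ∑ᶠ q ∈ (fun q : Δ × Δ => q.1 + q.2) ⁻¹' {d},
          novikovPushforward f r q.1 * novikovPushforward f s q.2 := by
        refine finsum_mem_congr rfl fun q _ => ?_
        rw [novikovPushforward, novikovPushforward, finsum_mem_mul_finsum_mem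
          (NovikovSet.finite_preimage_singleton_inter_support hφ hr q.1)
          (NovikovSet.finite_preimage_singleton_inter_support hφ hs q.2),
          ← preimage_prod_map_prod, singleton_prod_singleton]
    _ = ∑ᶠ e, novikovPushforward f r e * novikovPushforward f s (d - e) :=
        (finsum_comp_sub_eq_finsum_mem_add
          (fun q => novikovPushforward f r q.1 * novikovPushforward f s q.2) d).symm


theorem IsNovikovRingStructure.coe_one [DecidableEq Γ] {S : Set (Γ → K)} [CommRing S]
    (h : IsNovikovRingStructure S) (h₀ : Pi.single 0 1 ∈ S) :
    ((1 : S) : Γ → K) = Pi.single 0 1 := by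
  ext γ
  have := h.2 1 ⟨_, h₀⟩ γ
  rw [one_mul, finsum_eq_single _ γ fun α hα => by simp [sub_eq_zero, Ne.symm hα]] at this
  simpa using this.symm

noncomputable def novikovPushforwardRingHom (f : Γ →+ Δ) [CommRing (NovikovSet K φ)]
    (h₁ : IsNovikovRingStructure (NovikovSet K φ)) [CommRing (NovikovSet K w)]
    (h₂ : IsNovikovRingStructure (NovikovSet K w)) (hφ : ∀ γ, w (f γ) = φ γ)
    (hw : ∀ d e, w (d + e) = w d + w e) : NovikovSet K φ →+* NovikovSet K w :=
  { AddMonoidHom.mk' (fun r => ⟨novikovPushforward f r, novikovPushforward_mem hφ r.2⟩)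
      fun r s => Subtype.ext <| funext fun d => by
        change novikovPushforward f ((r + s : NovikovSet K φ) : Γ → K) d = _
        rw [h₂.1, show ((r + s : NovikovSet K φ) : Γ → K) = r.1 + s.1 from funext (h₁.1 r s),
          novikovPushforward_add hφ r.2 s.2]
        rfl with
    map_one' := by
      classical
      refine Subtype.ext ?_
      change novikovPushforward f ((1 : NovikovSet K φ) : Γ → K) = _
      rw [h₁.coe_one (NovikovSet.single_mem φ 0 1), h₂.coe_one (NovikovSet.single_mem w 0 1),
        novikovPushforward_single, map_zero]
    map_mul' := fun r s => Subtype.ext <| funext fun d => by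
      change novikovPushforward f ((r * s : NovikovSet K φ) : Γ → K) d = _
      rw [h₂.2, show ((r * s : NovikovSet K φ) : Γ → K) = _ from funext (h₁.2 r s)]
      exact novikovPushforward_convolution hφ hw r.2 s.2 d }

end Novikov

theorem novikov_pushforward_ringHom_general
    (K : Type*) [CommRing K]
    (Γ : Type*) [AddCommGroup Γ]
    (φ : Γ →+ ℝ)
    [CommRing ↥(NovikovSet K ⇑φ)]
    (h₁ : IsNovikovRingStructure (NovikovSet K ⇑φ))
    [CommRing ↥(NovikovSet K (fun a : φ.range => (a : ℝ)))]
    (h₂ : IsNovikovRingStructure (NovikovSet K (fun a : φ.range => (a : ℝ)))) :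
    (∀ r ∈ NovikovSet K ⇑φ, ∀ a : φ.range,
        {γ : Γ | r γ ≠ 0 ∧ φ γ = (a : ℝ)}.Finite) ∧
    (∀ r ∈ NovikovSet K ⇑φ,
        (fun a : φ.range => ∑ᶠ γ ∈ {γ : Γ | φ γ = (a : ℝ)}, r γ) ∈
          NovikovSet K (fun a : φ.range => (a : ℝ))) ∧
    ∃ F : ↥(NovikovSet K ⇑φ) →+* ↥(NovikovSet K (fun a : φ.range => (a : ℝ))),
      ∀ (r : ↥(NovikovSet K ⇑φ)) (a : φ.range),
        (F r).1 a = ∑ᶠ γ ∈ {γ : Γ | φ γ = (a : ℝ)}, r.1 γ := by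
  have hφ (γ : Γ) : (φ.rangeRestrict γ : ℝ) = φ γ := rfl
  refine ⟨fun r hr a => NovikovSet.finite_setOf_ne_zero_and_eq hr a, fun r hr => ?_,
    novikovPushforwardRingHom φ.rangeRestrict h₁ h₂ hφ (fun _ _ => rfl),
    fun r => congrFun (novikovPushforward_rangeRestrict φ r.1)⟩
  rw [← novikovPushforward_rangeRestrict]
  exact novikovPushforward_mem hφ hr

/-- Let `K` be a commutative ring, `Γ` a finitely generated torsion-free abelian
group and `φ : Γ → ℝ` a group homomorphism.  The assignment sending
`r ∈ Λ^K_φ(Γ)` to the function `s : φ(Γ) → K`, `s(a) = Σ_{γ : φ(γ) = a} r(γ)`, is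
well defined — each such sum is finite and `s` satisfies the Novikov condition on
`φ(Γ)` — and it is a ring homomorphism `Λ^K_φ(Γ) → Λ^K(φ(Γ))` (on monomials it is
`e^γ ↦ e^{φ(γ)}`). -/
theorem novikov_pushforward_ringHom
    (K : Type*) [CommRing K]
    (Γ : Type*) [AddCommGroup Γ] [AddGroup.FG Γ] (hTF : ∀ g : Γ, g ≠ 0 → ¬IsOfFinAddOrder g)
    (φ : Γ →+ ℝ)
    [CommRing ↥(NovikovSet K ⇑φ)]
    (h₁ : IsNovikovRingStructure (NovikovSet K ⇑φ))
    [CommRing ↥(NovikovSet K (fun a : φ.range => (a : ℝ)))]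
    (h₂ : IsNovikovRingStructure (NovikovSet K (fun a : φ.range => (a : ℝ)))) :
    (∀ r ∈ NovikovSet K ⇑φ, ∀ a : φ.range,
        {γ : Γ | r γ ≠ 0 ∧ φ γ = (a : ℝ)}.Finite) ∧
    (∀ r ∈ NovikovSet K ⇑φ,
        (fun a : φ.range => ∑ᶠ γ ∈ {γ : Γ | φ γ = (a : ℝ)}, r γ) ∈
          NovikovSet K (fun a : φ.range => (a : ℝ))) ∧
    ∃ F : ↥(NovikovSet K ⇑φ) →+* ↥(NovikovSet K (fun a : φ.range => (a : ℝ))),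
      ∀ (r : ↥(NovikovSet K ⇑φ)) (a : φ.range),
        (F r).1 a = ∑ᶠ γ ∈ {γ : Γ | φ γ = (a : ℝ)}, r.1 γ :=
  novikov_pushforward_ringHom_general K Γ φ h₁ h₂
end

section
/- Let ε > 0 and let A ⊆ [0, ∞) be a Lebesgue measurable set such that μ(A ∩ [0, n]) ≥ εn for every natural number n, where μ is Lebesgue measure. Then there exists a measurable set A′ ⊆ A such that μ(A′ ∩ [0, n]) ≥ (ε/2)n for every natural number n, and such that for every natural number n the set [n, n+1] \ A′ contains an interval of length 1/2. -/
/-!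
In each unit interval `[k, k+1]` one of the two closed halves carries at most half of the mass
of `A` there; delete that half from `A`. Since the open halves that are kept for different `k`
are disjoint, at least half of the mass of `A ∩ [0, n]` survives, and each `[n, n+1]` still
contains the deleted half as a gap.
-/

open MeasureTheory Set

variable (ν : Measure ℝ) [NullSingletonClass ν]

lemma exists_half_Icc_measure_le {a b : ℝ} (hab : a ≤ b) :
    ∃ c d, d - c = (b - a) / 2 ∧ Icc c d ⊆ Icc a b ∧
      ν (Icc a b) ≤ 2 * ν (Ioo a b \ Icc c d) := by
  set m := (a + b) / 2 with hm
  have ham : a ≤ m := by rw [hm]; linarith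
  have hmb : m ≤ b := by rw [hm]; linarith
  have hsplit : ν (Icc a b) ≤ ν (Icc a m) + ν (Icc m b) := by
    rw [← Icc_union_Icc_eq_Icc ham hmb]
    exact measure_union_le _ _
  rcases le_total (ν (Icc a m)) (ν (Icc m b)) with hle | hle
  · refine ⟨a, m, by rw [hm]; ring, Icc_subset_Icc le_rfl hmb, hsplit.trans ?_⟩
    calc ν (Icc a m) + ν (Icc m b) ≤ 2 * ν (Ioo m b) := by
          rw [two_mul, measure_congr Ioo_ae_eq_Icc]; gcongr
      _ ≤ 2 * ν (Ioo a b \ Icc a m) := by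
          gcongr
          exact fun x hx => ⟨⟨by linarith [hx.1], hx.2⟩, fun h => (h.2.trans_lt hx.1).false⟩
  · refine ⟨m, b, by rw [hm]; ring, Icc_subset_Icc ham le_rfl, hsplit.trans ?_⟩
    calc ν (Icc a m) + ν (Icc m b) ≤ 2 * ν (Ioo a m) := by
          rw [two_mul, measure_congr Ioo_ae_eq_Icc]; gcongr
      _ ≤ 2 * ν (Ioo a b \ Icc m b) := by
          gcongr
          exact fun x hx => ⟨⟨hx.1, by linarith [hx.2]⟩, fun h => (hx.2.trans_le h.1).false⟩

lemma Nat.eq_of_mem_Ioo_of_mem_Icc {k n : ℕ} {x : ℝ} (hn : x ∈ Ioo (n : ℝ) (n + 1))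
    (hk : x ∈ Icc (k : ℝ) (k + 1)) : k = n := by
  have h₁ : (k : ℝ) < n + 1 := hk.1.trans_lt hn.2
  have h₂ : (n : ℝ) < k + 1 := hn.1.trans_le hk.2
  norm_cast at h₁ h₂
  omega

lemma measure_Icc_le_two_mul_measure_diff_iUnion (c d : ℕ → ℝ)
    (hsub : ∀ k : ℕ, Icc (c k) (d k) ⊆ Icc (k : ℝ) (k + 1))
    (hhalf : ∀ k : ℕ, ν (Icc (k : ℝ) (k + 1)) ≤ 2 * ν (Ioo (k : ℝ) (k + 1) \ Icc (c k) (d k)))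
    (n : ℕ) : ν (Icc 0 (n : ℝ)) ≤ 2 * ν (Icc 0 (n : ℝ) \ ⋃ k, Icc (c k) (d k)) := by
  induction n with
  | zero => simp
  | succ n ih =>
    set G := ⋃ k, Icc (c k) (d k)
    have hkept : Ioo (n : ℝ) (n + 1) \ Icc (c n) (d n) ⊆ Icc 0 ((n : ℝ) + 1) \ G := by
      rintro x ⟨hx, hxn⟩
      refine ⟨⟨by linarith [hx.1, n.cast_nonneg (α := ℝ)], hx.2.le⟩, fun hxG => hxn ?_⟩
      obtain ⟨k, hk⟩ := mem_iUnion.1 hxG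
      rwa [← Nat.eq_of_mem_Ioo_of_mem_Icc hx (hsub k hk)]
    have hdisj : Disjoint (Icc 0 (n : ℝ) \ G) (Ioo (n : ℝ) (n + 1) \ Icc (c n) (d n)) :=
      disjoint_left.2 fun x hx hx' => (hx.1.2.trans_lt hx'.1.1).false
    have hunion : Icc 0 (n : ℝ) \ G ∪ Ioo (n : ℝ) (n + 1) \ Icc (c n) (d n) ⊆
        Icc 0 ((n : ℝ) + 1) \ G :=
      union_subset (sdiff_subset_sdiff_left (Icc_subset_Icc le_rfl (by linarith))) hkept
    push_cast
    calc ν (Icc 0 ((n : ℝ) + 1))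
        ≤ ν (Icc 0 (n : ℝ)) + ν (Icc (n : ℝ) (n + 1)) := by
          rw [← Icc_union_Icc_eq_Icc n.cast_nonneg (by linarith)]
          exact measure_union_le _ _
      _ ≤ 2 * ν (Icc 0 (n : ℝ) \ G) + 2 * ν (Ioo (n : ℝ) (n + 1) \ Icc (c n) (d n)) :=
          add_le_add ih (hhalf n)
      _ = 2 * ν (Icc 0 (n : ℝ) \ G ∪ Ioo (n : ℝ) (n + 1) \ Icc (c n) (d n)) := by
          rw [measure_union hdisj (measurableSet_Ioo.diff measurableSet_Icc), mul_add]
      _ ≤ 2 * ν (Icc 0 ((n : ℝ) + 1) \ G) := by gcongr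

lemma ENNReal.ofReal_half_le {x : ℝ} {y : ENNReal} (h : ENNReal.ofReal x ≤ 2 * y) :
    ENNReal.ofReal (x / 2) ≤ y := by
  rw [ENNReal.ofReal_div_of_pos two_pos, ENNReal.ofReal_ofNat]
  exact ENNReal.div_le_of_le_mul' h

theorem erase_half_keeps_density_and_leaves_gaps_general
    (ε : ℝ)
    (A : Set ℝ) (hAmeas : MeasurableSet A)
    (hdens : ∀ n : ℕ, ENNReal.ofReal (ε * n) ≤ volume (A ∩ Set.Icc (0 : ℝ) n)) :
    ∃ A' : Set ℝ, A' ⊆ A ∧ MeasurableSet A' ∧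
      (∀ n : ℕ, ENNReal.ofReal ((ε / 2) * n) ≤ volume (A' ∩ Set.Icc (0 : ℝ) n)) ∧
      (∀ n : ℕ, ∃ a b : ℝ, b - a = 1 / 2 ∧
        Set.Icc a b ⊆ Set.Icc (n : ℝ) (n + 1) \ A') := by
  choose c d hlen hsub hhalf using fun k : ℕ =>
    exists_half_Icc_measure_le (volume.restrict A) (by linarith : (k : ℝ) ≤ k + 1)
  set G := ⋃ k, Icc (c k) (d k)
  refine ⟨A \ G, sdiff_subset, hAmeas.diff (.iUnion fun _ => measurableSet_Icc), fun n => ?_,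
    fun n => ⟨c n, d n, by rw [hlen]; ring, fun x hx => ?_⟩⟩
  · have hmass := measure_Icc_le_two_mul_measure_diff_iUnion _ c d hsub hhalf n
    have hkept : (Icc 0 (n : ℝ) \ G) ∩ A = A \ G ∩ Icc 0 (n : ℝ) := by
      ext x; simp only [mem_inter_iff, mem_sdiff]; tauto
    rw [Measure.restrict_apply' hAmeas, Measure.restrict_apply' hAmeas, inter_comm, hkept] at hmass
    rw [div_mul_eq_mul_div]
    exact ENNReal.ofReal_half_le ((hdens n).trans hmass)
  · exact ⟨hsub n hx, fun hx' => hx'.2 (mem_iUnion_of_mem n hx)⟩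

/-- Let `ε > 0` and let `A ⊆ [0, ∞)` be a Lebesgue measurable set with
`μ(A ∩ [0, n]) ≥ εn` for every natural number `n`.  Then there is a measurable
subset `A′ ⊆ A` with `μ(A′ ∩ [0, n]) ≥ (ε/2)n` for every natural number `n`, such
that for every natural number `n` the set `[n, n+1] \ A′` contains an interval of
length `1/2`. -/
theorem erase_half_keeps_density_and_leaves_gaps
    (ε : ℝ) (hε : 0 < ε)
    (A : Set ℝ) (hAmeas : MeasurableSet A) (hA : A ⊆ Set.Ici (0 : ℝ))
    (hdens : ∀ n : ℕ, ENNReal.ofReal (ε * n) ≤ volume (A ∩ Set.Icc (0 : ℝ) n)) :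
    ∃ A' : Set ℝ, A' ⊆ A ∧ MeasurableSet A' ∧
      (∀ n : ℕ, ENNReal.ofReal ((ε / 2) * n) ≤ volume (A' ∩ Set.Icc (0 : ℝ) n)) ∧
      (∀ n : ℕ, ∃ a b : ℝ, b - a = 1 / 2 ∧
        Set.Icc a b ⊆ Set.Icc (n : ℝ) (n + 1) \ A') :=
  erase_half_keeps_density_and_leaves_gaps_general ε A hAmeas hdens
end
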